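/- arXiv:2212.08178 — 7 statements merged into one kernel-verified Lean document; each statement's English description precedes it below -/
import Mathlib

section
/- If (x̄, ȳ) ∈ F is an efficient solution of the BLP, then the lifted point (c¹·x̄, c²·x̄, ȳ) belongs to R, is an efficient solution of the bi-objective reformulation problem with feasible set R and objectives (w₁, w₂), and has the same objective vector: (w₁, w₂)(c¹·x̄, c²·x̄, ȳ) = (z₁(x̄,ȳ), z₂(x̄,ȳ)). -/
open scoped RealInnerProductSpace

section Cone

variable {E : Type*} [NormedAddCommGroup E] [InnerProductSpace ℝ E] [FiniteDimensional ℝ E]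

/-- The finitely generated cone over the family `v`. -/
def coneSet {ι : Type*} [Fintype ι] (v : ι → E) : Set E :=
  {x | ∃ c : ι → ℝ, (∀ i, 0 ≤ c i) ∧ ∑ i, c i • v i = x}

lemma coneSet_isClosed_of_li {ι : Type*} [Fintype ι] {v : ι → E}
    (hv : LinearIndependent ℝ v) : IsClosed (coneSet v) := by
  classical
  let L : (ι → ℝ) →ₗ[ℝ] E :=
    { toFun := fun c => ∑ i, c i • v i
      map_add' := by
        intro a b
        simp [add_smul, Finset.sum_add_distrib]
      map_smul' := by
        intro t a
        simp [Finset.smul_sum, smul_smul] }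
  have hker : LinearMap.ker L = ⊥ := by
    rw [LinearMap.ker_eq_bot']
    intro c hc
    funext i
    exact Fintype.linearIndependent_iff.mp hv c hc i
  have hemb := LinearMap.isClosedEmbedding_of_injective (f := L) hker
  have himg : coneSet v = L '' {c : ι → ℝ | ∀ i, 0 ≤ c i} := by
    ext x
    constructor
    · rintro ⟨c, hc, rfl⟩; exact ⟨c, hc, rfl⟩
    · rintro ⟨c, hc, rfl⟩; exact ⟨c, hc, rfl⟩
  rw [himg]
  apply hemb.isClosedMap
  have : {c : ι → ℝ | ∀ i, 0 ≤ c i} = ⋂ i, {c : ι → ℝ | 0 ≤ c i} := by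
    ext c; simp [Set.mem_iInter]
  rw [this]
  exact isClosed_iInter fun i => isClosed_le continuous_const (continuous_apply i)

lemma mem_coneSet_of_subset {ι : Type*} [Fintype ι] [DecidableEq ι] (v : ι → E)
    (S : Finset ι) {x : E} (hx : x ∈ coneSet (fun i : S => v i)) : x ∈ coneSet v := by
  obtain ⟨c, hc, rfl⟩ := hx
  refine ⟨fun i => if h : i ∈ S then c ⟨i, h⟩ else 0, ?_, ?_⟩
  · intro i
    by_cases h : i ∈ S
    · simpa [h] using hc ⟨i, h⟩
    · simp [h]
  · rw [← Finset.sum_subset (Finset.subset_univ S)]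
    · rw [← Finset.sum_attach S (fun i => (if h : i ∈ S then c ⟨i, h⟩ else 0) • v i)]
      apply Finset.sum_congr rfl
      intro i _
      simp [i.2]
    · intro i _ hi
      simp [hi]

lemma cone_caratheodory {ι : Type*} [Fintype ι] [DecidableEq ι] (v : ι → E) (x : E)
    (hx : x ∈ coneSet v) :
    ∃ S : Finset ι, LinearIndependent ℝ (fun i : S => v i) ∧
      x ∈ coneSet (fun i : S => v i) := by
  classical
  obtain ⟨c, hc, rfl⟩ := hx
  suffices H : ∀ (N : ℕ) (c : ι → ℝ), (Finset.univ.filter fun i => c i ≠ 0).card ≤ N →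
      (∀ i, 0 ≤ c i) → ∃ S : Finset ι, LinearIndependent ℝ (fun i : S => v i) ∧
        (∑ i, c i • v i) ∈ coneSet (fun i : S => v i) by
    exact H _ c le_rfl hc
  intro N
  induction N with
  | zero =>
    intro c hcard hc
    have hzero : ∀ i, c i = 0 := by
      intro i
      by_contra h
      have : i ∈ Finset.univ.filter fun i => c i ≠ 0 := by simp [h]
      have := Finset.card_pos.mpr ⟨i, this⟩
      omega
    refine ⟨∅, linearIndependent_empty_type, 0, by simp, ?_⟩
    simp [hzero]
  | succ N ih =>
    intro c hcard hc
    set T : Finset ι := Finset.univ.filter fun i => c i ≠ 0 with hT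
    by_cases hli : LinearIndependent ℝ (fun i : T => v i)
    · refine ⟨T, hli, fun i => c i, fun i => hc i, ?_⟩
      rw [← Finset.sum_subset (Finset.subset_univ T)]
      · exact Finset.sum_attach T fun i => c i • v i
      · intro i _ hi
        have : c i = 0 := by
          by_contra h
          exact hi (by simp [hT, h])
        simp [this]
    · obtain ⟨g, hgsum, j, hgj⟩ := Fintype.not_linearIndependent_iff.mp hli
      set d : ι → ℝ := fun i => if h : i ∈ T then g ⟨i, h⟩ else 0 with hd
      have hdsum : ∑ i, d i • v i = 0 := by
        rw [← Finset.sum_subset (Finset.subset_univ T)]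
        · rw [← Finset.sum_attach T (fun i => d i • v i)]
          rw [← hgsum]
          apply Finset.sum_congr rfl
          intro i _
          simp [hd, i.2]
        · intro i _ hi
          simp [hd, hi]
      have hdj : d (j : ι) ≠ 0 := by simpa [hd, j.2] using hgj
      -- replace d by a version with a positive entry
      obtain ⟨e, hesum, hesupp, j', hj'⟩ :
          ∃ e : ι → ℝ, ∑ i, e i • v i = 0 ∧ (∀ i, i ∉ T → e i = 0) ∧ ∃ j' : ι, 0 < e j' := by
        rcases lt_or_gt_of_ne hdj with h | h
        · refine ⟨-d, by simpa using hdsum, ?_, ⟨j, by simpa using h⟩⟩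
          intro i hi; simp [hd, hi]
        · exact ⟨d, hdsum, fun i hi => by simp [hd, hi], ⟨j, h⟩⟩
      have hj'T : (j' : ι) ∈ T := by
        by_contra h
        rw [hesupp _ h] at hj'
        exact lt_irrefl _ hj'
      set U : Finset ι := T.filter fun i => 0 < e i with hU
      have hUne : U.Nonempty := ⟨j', by simp [hU, hj'T, hj']⟩
      obtain ⟨j₀, hj₀U, hj₀min⟩ := Finset.exists_min_image U (fun i => c i / e i) hUne
      have hj₀T : j₀ ∈ T := (Finset.mem_filter.mp hj₀U).1
      have hej₀ : 0 < e j₀ := (Finset.mem_filter.mp hj₀U).2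
      have hcj₀ : 0 < c j₀ := by
        rcases (hc j₀).lt_or_eq with h | h
        · exact h
        · exact absurd h.symm (by simpa [hT] using hj₀T)
      set t : ℝ := c j₀ / e j₀ with ht
      have htpos : 0 < t := div_pos hcj₀ hej₀
      set c' : ι → ℝ := fun i => c i - t * e i with hc'
      have hc'nonneg : ∀ i, 0 ≤ c' i := by
        intro i
        by_cases hei : 0 < e i
        · have hiT : i ∈ T := by
            by_contra h
            rw [hesupp _ h] at hei
            exact lt_irrefl _ hei
          have hiU : i ∈ U := by simp [hU, hiT, hei]
          have := hj₀min i hiU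
          have h4 : t * e i ≤ c i := by
            rw [← div_mul_cancel₀ (c i) (ne_of_gt hei)]
            exact mul_le_mul_of_nonneg_right this hei.le
          simp only [hc']; linarith
        · push_neg at hei
          have : t * e i ≤ 0 := mul_nonpos_of_nonneg_of_nonpos htpos.le hei
          simp [hc']
          linarith [hc i]
      have hc'j₀ : c' j₀ = 0 := by
        simp [hc', ht]
        field_simp
        ring
      have hc'supp : (Finset.univ.filter fun i => c' i ≠ 0) ⊆ T.erase j₀ := by
        intro i hi
        simp only [Finset.mem_filter, Finset.mem_univ, true_and] at hi
        rcases eq_or_ne i j₀ with rfl | hij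
        · exact absurd hc'j₀ hi
        · refine Finset.mem_erase.mpr ⟨hij, ?_⟩
          by_contra h
          have h1 : c i = 0 := by simpa [hT] using h
          have h2 : e i = 0 := hesupp _ h
          exact hi (by simp [hc', h1, h2])
      have hcard' : (Finset.univ.filter fun i => c' i ≠ 0).card ≤ N := by
        have h1 : (T.erase j₀).card < T.card := Finset.card_erase_lt_of_mem hj₀T
        have h2 := Finset.card_le_card hc'supp
        omega
      have hsum' : ∑ i, c' i • v i = ∑ i, c i • v i := by
        simp only [hc', sub_smul, mul_smul, Finset.sum_sub_distrib]
        rw [← Finset.smul_sum, hesum]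
        simp
      obtain ⟨S, hS1, hS2⟩ := ih c' hcard' hc'nonneg
      rw [hsum'] at hS2
      exact ⟨S, hS1, hS2⟩

lemma coneSet_isClosed {ι : Type*} [Fintype ι] (v : ι → E) : IsClosed (coneSet v) := by
  classical
  have : coneSet v = ⋃ S ∈ {S : Finset ι | LinearIndependent ℝ (fun i : S => v i)},
      coneSet (fun i : S => v i) := by
    ext x
    simp only [Set.mem_iUnion, Set.mem_setOf_eq]
    constructor
    · intro hx
      obtain ⟨S, h1, h2⟩ := cone_caratheodory v x hx
      exact ⟨S, h1, h2⟩
    · rintro ⟨S, _, h2⟩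
      exact mem_coneSet_of_subset v S h2
  rw [this]
  exact Set.Finite.isClosed_biUnion (Set.toFinite _)
    (fun S hS => coneSet_isClosed_of_li hS)

lemma farkas {ι : Type*} [Fintype ι] (v : ι → E) (w : E)
    (h : ∀ y : E, (∀ i, 0 ≤ ⟪v i, y⟫) → 0 ≤ ⟪w, y⟫) :
    ∃ c : ι → ℝ, (∀ i, 0 ≤ c i) ∧ ∑ i, c i • v i = w := by
  classical
  by_contra hcon
  have hw : w ∉ coneSet v := fun hw => by
    obtain ⟨c, h1, h2⟩ := hw
    exact hcon ⟨c, h1, h2⟩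
  let K : ConvexCone ℝ E :=
    { carrier := coneSet v
      smul_mem' := by
        rintro t ht x ⟨c, hc, rfl⟩
        refine ⟨fun i => t * c i, fun i => mul_nonneg ht.le (hc i), ?_⟩
        rw [Finset.smul_sum]
        simp [mul_smul]
      add_mem' := by
        rintro x ⟨c, hc, rfl⟩ y ⟨c', hc', rfl⟩
        refine ⟨fun i => c i + c' i, fun i => add_nonneg (hc i) (hc' i), ?_⟩
        simp [add_smul, Finset.sum_add_distrib] }
  have hne : (K : Set E).Nonempty := ⟨0, ⟨fun _ => 0, fun _ => le_rfl, by simp⟩⟩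
  have hcl : IsClosed (K : Set E) := coneSet_isClosed v
  let P : ProperCone ℝ E :=
    { carrier := coneSet v
      zero_mem' := ⟨fun _ => 0, fun _ => le_rfl, by simp⟩
      add_mem' := fun hx hy => K.add_mem' hx hy
      smul_mem' := by
        rintro t x ⟨c, hc, rfl⟩
        refine ⟨fun i => (t : ℝ) * c i, fun i => mul_nonneg t.2 (hc i), ?_⟩
        show _ = (t : ℝ) • (∑ i, c i • v i : E)
        rw [Finset.smul_sum]
        simp [mul_smul]
      isClosed' := coneSet_isClosed v }
  obtain ⟨y, hy1, hy2⟩ : ∃ y : E, (∀ x ∈ (K : Set E), 0 ≤ ⟪x, y⟫) ∧ ⟪y, w⟫ < 0 := by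
    obtain ⟨y, h1, h2⟩ := ProperCone.hyperplane_separation' P hw
    exact ⟨y, h1, by rwa [real_inner_comm]⟩
  have hvy : ∀ i, 0 ≤ ⟪v i, y⟫ := by
    intro i
    apply hy1
    refine ⟨fun j => if j = i then 1 else 0, fun j => by positivity, ?_⟩
    simp [ite_smul]
  have := h y hvy
  rw [real_inner_comm] at hy2
  linarith

end Cone

lemma farkas_fun {ι κ : Type*} [Fintype ι] [Fintype κ] (v : ι → κ → ℝ) (w : κ → ℝ)
    (h : ∀ y : κ → ℝ, (∀ i, 0 ≤ ∑ k, v i k * y k) → 0 ≤ ∑ k, w k * y k) :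
    ∃ c : ι → ℝ, (∀ i, 0 ≤ c i) ∧ ∀ k, ∑ i, c i * v i k = w k := by
  classical
  let V : ι → EuclideanSpace ℝ κ := fun i => (WithLp.equiv 2 _).symm (v i)
  let W : EuclideanSpace ℝ κ := (WithLp.equiv 2 _).symm w
  obtain ⟨c, hc, hsum⟩ := farkas V W (by
    intro y hy
    have h1 : ∀ i, 0 ≤ ∑ k, v i k * y k := by
      intro i
      have := hy i
      simpa [PiLp.inner_apply, V, RCLike.inner_apply, conj_trivial,
        mul_comm] using this
    have := h (fun k => y k) h1
    simpa [PiLp.inner_apply, W, RCLike.inner_apply, conj_trivial,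
      mul_comm] using this)
  refine ⟨c, hc, fun k => ?_⟩
  let ev : EuclideanSpace ℝ κ →ₗ[ℝ] ℝ :=
    (LinearMap.proj k).comp (WithLp.linearEquiv 2 ℝ (κ → ℝ)).toLinearMap
  have h2 := congrArg ev hsum
  rw [map_sum] at h2
  have h3 : ∀ i, ev (c i • V i) = c i * v i k := by
    intro i
    rw [map_smul]
    rfl
  have h4 : ev W = w k := rfl
  rw [h4] at h2
  rw [← h2]
  exact Finset.sum_congr rfl fun i _ => h3 i

open Matrix

lemma dot_le_dot {m : ℕ} {π u w : Fin m → ℝ} (hπ : 0 ≤ π) (h : u ≤ w) :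
    π ⬝ᵥ u ≤ π ⬝ᵥ w :=
  Finset.sum_le_sum fun i _ => mul_le_mul_of_nonneg_left (h i) (hπ i)

lemma dot_nonpos {m : ℕ} {u x : Fin m → ℝ} (hu : u ≤ 0) (hx : 0 ≤ x) :
    u ⬝ᵥ x ≤ 0 :=
  Finset.sum_nonpos fun i _ => mul_nonpos_of_nonpos_of_nonneg (hu i) (hx i)

/-- Feasible set of the bi-objective linear program (BLP). -/
def BFeas {p n q s : ℕ} (A : Matrix (Fin p) (Fin n) ℝ) (B : Matrix (Fin p) (Fin q) ℝ)
    (D : Matrix (Fin s) (Fin q) ℝ) (b : Fin p → ℝ) (d : Fin s → ℝ)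
    (x : Fin n → ℝ) (y : Fin q → ℝ) : Prop :=
  b ≤ A.mulVec x + B.mulVec y ∧ d ≤ D.mulVec y ∧ 0 ≤ x ∧ 0 ≤ y

/-- Feasible set of the Benders reformulation with all weighted optimality cuts. -/
def BRefeas {p n q s : ℕ} (A : Matrix (Fin p) (Fin n) ℝ) (B : Matrix (Fin p) (Fin q) ℝ)
    (D : Matrix (Fin s) (Fin q) ℝ) (b : Fin p → ℝ) (d : Fin s → ℝ)
    (c1 c2 : Fin n → ℝ) (θ1 θ2 : ℝ) (y : Fin q → ℝ) : Prop :=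
  d ≤ D.mulVec y ∧ 0 ≤ y ∧
  (∀ π : Fin p → ℝ, 0 ≤ π → Aᵀ.mulVec π ≤ 0 → π ⬝ᵥ (b - B.mulVec y) ≤ 0) ∧
  (∀ lam : ℝ, lam ∈ Set.Icc (0 : ℝ) 1 → ∀ π : Fin p → ℝ, 0 ≤ π →
    Aᵀ.mulVec π ≤ lam • c1 + (1 - lam) • c2 →
    π ⬝ᵥ (b - B.mulVec y) ≤ lam * θ1 + (1 - lam) * θ2)

/-- If `(x̄, ȳ)` is an efficient solution of the BLP, then the lifted point
`(c¹·x̄, c²·x̄, ȳ)` belongs to `R`, is an efficient solution of the bi-objective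
reformulation, and has the same objective vector. -/
theorem efficient_lifts_to_reformulation
    {p n q s : ℕ} (A : Matrix (Fin p) (Fin n) ℝ) (B : Matrix (Fin p) (Fin q) ℝ)
    (D : Matrix (Fin s) (Fin q) ℝ) (b : Fin p → ℝ) (d : Fin s → ℝ)
    (c1 c2 : Fin n → ℝ) (f1 f2 : Fin q → ℝ)
    (xb : Fin n → ℝ) (yb : Fin q → ℝ)
    (hfeas : BFeas A B D b d xb yb)
    (heff : ¬ ∃ x y, BFeas A B D b d x y ∧
      c1 ⬝ᵥ x + f1 ⬝ᵥ y ≤ c1 ⬝ᵥ xb + f1 ⬝ᵥ yb ∧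
      c2 ⬝ᵥ x + f2 ⬝ᵥ y ≤ c2 ⬝ᵥ xb + f2 ⬝ᵥ yb ∧
      (c1 ⬝ᵥ x + f1 ⬝ᵥ y, c2 ⬝ᵥ x + f2 ⬝ᵥ y) ≠
        (c1 ⬝ᵥ xb + f1 ⬝ᵥ yb, c2 ⬝ᵥ xb + f2 ⬝ᵥ yb)) :
    BRefeas A B D b d c1 c2 (c1 ⬝ᵥ xb) (c2 ⬝ᵥ xb) yb ∧
    (¬ ∃ θ1 θ2 : ℝ, ∃ y : Fin q → ℝ, BRefeas A B D b d c1 c2 θ1 θ2 y ∧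
      θ1 + f1 ⬝ᵥ y ≤ (c1 ⬝ᵥ xb) + f1 ⬝ᵥ yb ∧
      θ2 + f2 ⬝ᵥ y ≤ (c2 ⬝ᵥ xb) + f2 ⬝ᵥ yb ∧
      (θ1 + f1 ⬝ᵥ y, θ2 + f2 ⬝ᵥ y) ≠
        ((c1 ⬝ᵥ xb) + f1 ⬝ᵥ yb, (c2 ⬝ᵥ xb) + f2 ⬝ᵥ yb)) ∧
    ((c1 ⬝ᵥ xb) + f1 ⬝ᵥ yb, (c2 ⬝ᵥ xb) + f2 ⬝ᵥ yb) =
      (c1 ⬝ᵥ xb + f1 ⬝ᵥ yb, c2 ⬝ᵥ xb + f2 ⬝ᵥ yb) := by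
  obtain ⟨hb, hd, hx0, hy0⟩ := hfeas
  have hbb : b - B.mulVec yb ≤ A.mulVec xb := by
    intro i
    have := hb i
    simp only [Pi.sub_apply, Pi.add_apply] at this ⊢
    linarith
  refine ⟨⟨hd, hy0, ?_, ?_⟩, ?_, rfl⟩
  · -- feasibility cuts hold at the lifted point
    intro π hπ hA
    calc π ⬝ᵥ (b - B.mulVec yb) ≤ π ⬝ᵥ (A.mulVec xb) := dot_le_dot hπ hbb
      _ = (Aᵀ.mulVec π) ⬝ᵥ xb := by rw [dotProduct_mulVec, mulVec_transpose]
      _ ≤ 0 := dot_nonpos hA hx0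
  · -- optimality cuts hold at the lifted point
    intro lam _ π hπ hA
    calc π ⬝ᵥ (b - B.mulVec yb) ≤ π ⬝ᵥ (A.mulVec xb) := dot_le_dot hπ hbb
      _ = (Aᵀ.mulVec π) ⬝ᵥ xb := by rw [dotProduct_mulVec, mulVec_transpose]
      _ ≤ (lam • c1 + (1 - lam) • c2) ⬝ᵥ xb :=
          Finset.sum_le_sum fun j _ => mul_le_mul_of_nonneg_right (hA j) (hx0 j)
      _ = lam * (c1 ⬝ᵥ xb) + (1 - lam) * (c2 ⬝ᵥ xb) := by
          simp [add_dotProduct, smul_dotProduct, smul_eq_mul]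
  · -- efficiency of the lifted point
    rintro ⟨θ1, θ2, y, ⟨hdy, hy0', hcut0, hcut⟩, h1, h2, hne⟩
    set u : Fin p → ℝ := b - B.mulVec y with hu
    obtain ⟨c, hc, hceq⟩ := farkas_fun
      (ι := Fin n ⊕ (Fin p ⊕ Fin 2)) (κ := Fin p ⊕ Fin 2)
      (Sum.elim
        (fun j => Sum.elim (fun i => A i j) (fun m => if m = 0 then c1 j else c2 j))
        (Sum.elim
          (fun i => Sum.elim (fun i' => if i' = i then (-1 : ℝ) else 0) (fun _ => 0))
          (fun m => Sum.elim (fun _ => (0 : ℝ)) (fun m' => if m' = m then 1 else 0))))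
      (Sum.elim u (fun m => if m = 0 then θ1 else θ2))
      (by
        intro yv hyv
        set π : Fin p → ℝ := fun i => -(yv (Sum.inl i)) with hπdef
        have hπ0 : 0 ≤ π := by
          intro i
          have := hyv (Sum.inr (Sum.inl i))
          rw [Fintype.sum_sum_type] at this
          simp only [Sum.elim_inl, Sum.elim_inr, ite_mul, neg_one_mul, zero_mul,
            Finset.sum_const_zero, add_zero, Finset.sum_ite_eq', Finset.mem_univ,
            if_pos] at this
          simpa [hπdef] using this
        have hμ0 : (0:ℝ) ≤ yv (Sum.inr 0) ∧ (0:ℝ) ≤ yv (Sum.inr 1) := by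
          constructor
          · have := hyv (Sum.inr (Sum.inr 0))
            rw [Fintype.sum_sum_type] at this
            simpa [Fin.sum_univ_two] using this
          · have := hyv (Sum.inr (Sum.inr 1))
            rw [Fintype.sum_sum_type] at this
            simpa [Fin.sum_univ_two] using this
        have hAπ : ∀ j, (Aᵀ.mulVec π) j ≤
            yv (Sum.inr 0) * c1 j + yv (Sum.inr 1) * c2 j := by
          intro j
          have h := hyv (Sum.inl j)
          rw [Fintype.sum_sum_type] at h
          simp only [Sum.elim_inl, Sum.elim_inr, Fin.sum_univ_two] at h
          have hAT : (Aᵀ.mulVec π) j = -∑ i, A i j * yv (Sum.inl i) := by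
            simp only [Matrix.mulVec, dotProduct, transpose_apply, hπdef,
              mul_neg, Finset.sum_neg_distrib]
          rw [hAT]
          norm_num at h
          linarith
        -- goal : 0 ≤ ∑ k, w k * yv k
        rw [Fintype.sum_sum_type]
        simp only [Sum.elim_inl, Sum.elim_inr, Fin.sum_univ_two]
        have hudot : π ⬝ᵥ u = -∑ i, u i * yv (Sum.inl i) := by
          simp only [dotProduct, hπdef, neg_mul, Finset.sum_neg_distrib,
            mul_comm]
        have key : π ⬝ᵥ u ≤ yv (Sum.inr 0) * θ1 + yv (Sum.inr 1) * θ2 := by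
          rcases eq_or_lt_of_le (add_nonneg hμ0.1 hμ0.2) with hT | hT
          · -- both multipliers vanish
            have hm0 : yv (Sum.inr 0) = 0 := by linarith [hμ0.1, hμ0.2]
            have hm1 : yv (Sum.inr 1) = 0 := by linarith [hμ0.1, hμ0.2]
            have : Aᵀ.mulVec π ≤ 0 := by
              intro j
              have := hAπ j
              rw [hm0, hm1] at this
              simpa using this
            have := hcut0 π hπ0 this
            rw [hm0, hm1]
            simpa using this
          · set T : ℝ := yv (Sum.inr 0) + yv (Sum.inr 1) with hTdef
            have hTne : T ≠ 0 := ne_of_gt hT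
            set lam : ℝ := yv (Sum.inr 0) / T with hlam
            have hlam0 : 0 ≤ lam := div_nonneg hμ0.1 hT.le
            have hlam1 : lam ≤ 1 := by
              rw [hlam, div_le_one hT]
              linarith [hμ0.2]
            have h1lam : 1 - lam = yv (Sum.inr 1) / T := by
              rw [hlam, eq_div_iff hTne, sub_mul, div_mul_cancel₀ _ hTne]
              linarith [hTdef]
            have hπ'0 : 0 ≤ T⁻¹ • π := by
              intro i
              exact mul_nonneg (inv_nonneg.mpr hT.le) (hπ0 i)
            have hA' : Aᵀ.mulVec (T⁻¹ • π) ≤ lam • c1 + (1 - lam) • c2 := by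
              intro j
              rw [Matrix.mulVec_smul]
              simp only [Pi.smul_apply, Pi.add_apply, smul_eq_mul, h1lam]
              simp only [hlam]
              have := hAπ j
              have hTinv : (0:ℝ) ≤ T⁻¹ := inv_nonneg.mpr hT.le
              calc T⁻¹ * (Aᵀ.mulVec π) j
                  ≤ T⁻¹ * (yv (Sum.inr 0) * c1 j + yv (Sum.inr 1) * c2 j) :=
                    mul_le_mul_of_nonneg_left this hTinv
                _ = yv (Sum.inr 0) / T * c1 j + yv (Sum.inr 1) / T * c2 j := by
                    field_simp <;> ring
            have hk := hcut lam ⟨hlam0, hlam1⟩ (T⁻¹ • π) hπ'0 hA'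
            rw [smul_dotProduct] at hk
            have := mul_le_mul_of_nonneg_left hk hT.le
            calc π ⬝ᵥ u = T * (T⁻¹ • (π ⬝ᵥ u)) := by
                  rw [smul_eq_mul]
                  field_simp
              _ ≤ T * (lam * θ1 + (1 - lam) * θ2) := this
              _ = yv (Sum.inr 0) * θ1 + yv (Sum.inr 1) * θ2 := by
                  rw [hlam, h1lam]
                  field_simp <;> ring
        rw [hudot] at key
        norm_num
        linarith [key]
        )
    -- extract x from the Farkas certificate
    set x : Fin n → ℝ := fun j => c (Sum.inl j) with hx
    have hxnn : 0 ≤ x := fun j => hc (Sum.inl j)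
    have hAx : ∀ i, u i ≤ (A.mulVec x) i := by
      intro i
      have h := hceq (Sum.inl i)
      rw [Fintype.sum_sum_type, Fintype.sum_sum_type] at h
      simp only [Sum.elim_inl, Sum.elim_inr, mul_zero, Finset.sum_const_zero,
        add_zero, mul_ite, mul_neg_one, mul_zero] at h
      rw [Finset.sum_ite_eq] at h
      simp only [Finset.mem_univ, if_pos] at h
      have hmv : (A.mulVec x) i = ∑ j, c (Sum.inl j) * A i j := by
        simp only [Matrix.mulVec, dotProduct, hx, mul_comm]
      rw [hmv]
      have := hc (Sum.inr (Sum.inl i))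
      linarith
    have hc1x : c1 ⬝ᵥ x ≤ θ1 := by
      have h := hceq (Sum.inr 0)
      rw [Fintype.sum_sum_type, Fintype.sum_sum_type] at h
      simp only [Sum.elim_inl, Sum.elim_inr, if_pos rfl, mul_zero,
        Finset.sum_const_zero, Fin.sum_univ_two, mul_ite, mul_one] at h
      norm_num at h
      have hdp : c1 ⬝ᵥ x = ∑ j, c (Sum.inl j) * c1 j := by
        simp only [dotProduct, hx, mul_comm]
      rw [hdp]
      have := hc (Sum.inr (Sum.inr 0))
      linarith
    have hc2x : c2 ⬝ᵥ x ≤ θ2 := by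
      have h := hceq (Sum.inr 1)
      rw [Fintype.sum_sum_type, Fintype.sum_sum_type] at h
      simp only [Sum.elim_inl, Sum.elim_inr, mul_zero,
        Finset.sum_const_zero, Fin.sum_univ_two, mul_ite, mul_one] at h
      norm_num at h
      have hdp : c2 ⬝ᵥ x = ∑ j, c (Sum.inl j) * c2 j := by
        simp only [dotProduct, hx, mul_comm]
      rw [hdp]
      have := hc (Sum.inr (Sum.inr 1))
      linarith
    -- (x, y) is feasible for the BLP and dominates (xb, yb): contradiction
    apply heff
    refine ⟨x, y, ⟨?_, hdy, hxnn, hy0'⟩, ?_, ?_, ?_⟩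
    · intro i
      have := hAx i
      simp only [hu, Pi.sub_apply, Pi.add_apply] at this ⊢
      linarith
    · linarith [dotProduct_comm f1 y]
    · linarith
    · intro hcon
      rw [Prod.mk.injEq] at hcon
      apply hne
      rw [Prod.mk.injEq]
      constructor
      · linarith [hcon.1]
      · linarith [hcon.2]
end

section
/- The non-dominated sets of the BLP and of its Benders reformulation coincide: {(z₁(x,y), z₂(x,y)) : (x,y) ∈ F is efficient for the BLP} = {(w₁(θ₁,θ₂,y), w₂(θ₁,θ₂,y)) : (θ₁,θ₂,y) ∈ R is efficient for the reformulation}. -/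
section ConeMachinery

open Finset

variable {E : Type*} [NormedAddCommGroup E] [InnerProductSpace ℝ E] [FiniteDimensional ℝ E]
variable {ι : Type*} [Fintype ι] [DecidableEq ι]

def coneSpan (v : ι → E) : Set E :=
  {x | ∃ t : ι → ℝ, (∀ i, 0 ≤ t i) ∧ x = ∑ i, t i • v i}

open Classical in
lemma carat_aux (v : ι → E) :
    ∀ k : ℕ, ∀ t : ι → ℝ, (∀ i, 0 ≤ t i) →
      (Finset.univ.filter (fun i => t i ≠ 0)).card ≤ k →
      ∃ T : Finset ι, LinearIndependent ℝ (fun i : T => v i) ∧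
        ∃ t' : ι → ℝ, (∀ i, 0 ≤ t' i) ∧ (∀ i ∉ T, t' i = 0) ∧
          ∑ i, t' i • v i = ∑ i, t i • v i := by
  intro k
  induction k with
  | zero =>
    intro t ht hcard
    refine ⟨∅, linearIndependent_empty_type, t, ht, ?_, rfl⟩
    intro i _
    by_contra h
    have : i ∈ Finset.univ.filter (fun i => t i ≠ 0) := by simp [h]
    have := Finset.card_pos.mpr ⟨i, this⟩
    omega
  | succ k ih =>
    intro t ht hcard
    set S := Finset.univ.filter (fun i => t i ≠ 0) with hS
    by_cases hLI : LinearIndependent ℝ (fun i : S => v i)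
    · refine ⟨S, hLI, t, ht, ?_, rfl⟩
      intro i hi
      by_contra h
      exact hi (by simp [hS, h])
    · obtain ⟨g, hg0, i1, hi1⟩ := Fintype.not_linearIndependent_iff.mp hLI
      -- extend g to ι
      set c0 : ι → ℝ := fun i => if h : i ∈ S then g ⟨i, h⟩ else 0 with hc0
      have hc0sum : ∑ i, c0 i • v i = 0 := by
        rw [← Finset.sum_subset (Finset.subset_univ S)]
        · rw [← Finset.sum_attach S (fun i => c0 i • v i)]
          rw [← hg0]
          apply Finset.sum_congr rfl
          intro i _
          simp [hc0, i.2]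
        · intro i _ hi
          simp [hc0, hi]
      have hc0supp : ∀ i ∉ S, c0 i = 0 := fun i hi => by simp [hc0, hi]
      have hc0ne : c0 (i1 : ι) ≠ 0 := by simpa [hc0, i1.2] using hi1
      -- wlog some positive coordinate
      obtain ⟨c, hcsum, hcsupp, i2, hi2⟩ :
          ∃ c : ι → ℝ, ∑ i, c i • v i = 0 ∧ (∀ i ∉ S, c i = 0) ∧ ∃ i, 0 < c i := by
        rcases lt_or_gt_of_ne hc0ne with h | h
        · refine ⟨-c0, by simp [hc0sum], fun i hi => by simp [hc0supp i hi], ⟨i1, by simpa using h⟩⟩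
        · exact ⟨c0, hc0sum, hc0supp, ⟨i1, h⟩⟩
      set P := Finset.univ.filter (fun i => 0 < c i) with hP
      have hPne : P.Nonempty := ⟨i2, by simp [hP, hi2]⟩
      obtain ⟨i0, hi0P, hi0min⟩ := Finset.exists_min_image P (fun i => t i / c i) hPne
      have hci0 : 0 < c i0 := by simpa [hP] using hi0P
      set τ := t i0 / c i0 with hτ
      have hτ0 : 0 ≤ τ := div_nonneg (ht i0) hci0.le
      set t' : ι → ℝ := fun i => t i - τ * c i with ht'
      have ht'0 : ∀ i, 0 ≤ t' i := by
        intro i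
        rcases le_or_gt (c i) 0 with h | h
        · have : τ * c i ≤ 0 := mul_nonpos_of_nonneg_of_nonpos hτ0 h
          simp only [ht']
          linarith [ht i]
        · have hiP : i ∈ P := by simp [hP, h]
          have := hi0min i hiP
          have : τ * c i ≤ t i := by
            rw [div_le_div_iff₀ hci0 h] at this
            rw [hτ, div_mul_eq_mul_div, div_le_iff₀ hci0]
            linarith
          simp only [ht']; linarith
      have ht'sum : ∑ i, t' i • v i = ∑ i, t i • v i := by
        simp only [ht', sub_smul, Finset.sum_sub_distrib, mul_smul]
        rw [← Finset.smul_sum, hcsum, smul_zero, sub_zero]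
      have hi0S : i0 ∈ S := by
        by_contra h
        exact absurd (hcsupp i0 h) hci0.ne'
      have ht'i0 : t' i0 = 0 := by
        simp only [ht', hτ]
        field_simp
        ring
      have hsub : Finset.univ.filter (fun i => t' i ≠ 0) ⊆ S.erase i0 := by
        intro i hi
        simp only [Finset.mem_filter] at hi
        rw [Finset.mem_erase]
        constructor
        · rintro rfl; exact hi.2 ht'i0
        · by_contra h
          exact hi.2 (by simp [ht', hcsupp i h, hS, Finset.mem_filter] at h ⊢; simp [h])
      have hcard' : (Finset.univ.filter (fun i => t' i ≠ 0)).card ≤ k := by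
        have h1 := Finset.card_le_card hsub
        have h2 : (S.erase i0).card < S.card := Finset.card_erase_lt_of_mem hi0S
        omega
      obtain ⟨T, hT, t'', h1, h2, h3⟩ := ih t' ht'0 hcard'
      exact ⟨T, hT, t'', h1, h2, by rw [h3, ht'sum]⟩

lemma caratheodory (v : ι → E) {x : E} (hx : x ∈ coneSpan v) :
    ∃ T : Finset ι, LinearIndependent ℝ (fun i : T => v i) ∧
      ∃ t : ι → ℝ, (∀ i, 0 ≤ t i) ∧ (∀ i ∉ T, t i = 0) ∧ x = ∑ i, t i • v i := by
  obtain ⟨t, ht, rfl⟩ := hx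
  obtain ⟨T, hT, t', h1, h2, h3⟩ := carat_aux v _ t ht le_rfl
  exact ⟨T, hT, t', h1, h2, h3.symm⟩

set_option linter.unusedSectionVars false

lemma isClosed_simplicial (w : ι → E) (hw : LinearIndependent ℝ w) :
    IsClosed ((fun t : ι → ℝ => ∑ i, t i • w i) '' {t | ∀ i, 0 ≤ t i}) := by
  let L : (ι → ℝ) →ₗ[ℝ] E :=
    { toFun := fun t => ∑ i, t i • w i
      map_add' := fun a b => by simp [add_smul, Finset.sum_add_distrib]
      map_smul' := fun c a => by simp [smul_smul, Finset.smul_sum]}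
  have hker : LinearMap.ker L = ⊥ := by
    rw [LinearMap.ker_eq_bot']
    intro m hm
    exact funext (Fintype.linearIndependent_iff.mp hw m hm)
  have hembed := LinearMap.isClosedEmbedding_of_injective (f := L) hker
  have hclosed : IsClosed {t : ι → ℝ | ∀ i, 0 ≤ t i} := by
    have : {t : ι → ℝ | ∀ i, 0 ≤ t i} = ⋂ i, {t | 0 ≤ t i} := by
      ext t; simp
    rw [this]
    exact isClosed_iInter fun i => isClosed_le continuous_const (continuous_apply i)
  exact hembed.isClosedMap _ hclosed

lemma isClosed_coneSpan (v : ι → E) : IsClosed (coneSpan v) := by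
  classical
  have : coneSpan v = ⋃ T : {T : Finset ι // LinearIndependent ℝ (fun i : T => v i)},
      (fun t : { i // i ∈ T.1 } → ℝ => ∑ i : { i // i ∈ T.1 }, t i • v i.1) '' {t | ∀ i, 0 ≤ t i} := by
    ext x
    constructor
    · intro hx
      obtain ⟨T, hT, t, h1, h2, h3⟩ := caratheodory v hx
      refine Set.mem_iUnion.mpr ⟨⟨T, hT⟩, ⟨fun i => t i, fun i => h1 i, ?_⟩⟩
      simp only
      rw [h3, ← Finset.sum_subset (Finset.subset_univ T)]
      · exact Finset.sum_coe_sort T (fun i => t i • v i)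
      · intro i _ hi; rw [h2 i hi, zero_smul]
    · intro hx
      obtain ⟨⟨T, hT⟩, t, h1, rfl⟩ := Set.mem_iUnion.mp hx
      refine ⟨fun i => if h : i ∈ T then t ⟨i, h⟩ else 0, fun i => ?_, ?_⟩
      · by_cases h : i ∈ T <;> simp [h, h1 _]
      · rw [← Finset.sum_subset (Finset.subset_univ T)]
        · rw [← Finset.sum_coe_sort T (fun i => (if h : i ∈ T then t ⟨i, h⟩ else 0) • v i)]
          exact Finset.sum_congr rfl fun i _ => by simp [i.2]
        · intro i _ hi; simp [hi]
  rw [this]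
  exact isClosed_iUnion_of_finite fun T => isClosed_simplicial _ T.2

def coneSpanCone (v : ι → E) : ConvexCone ℝ E where
  carrier := coneSpan v
  smul_mem' := by
    rintro c hc x ⟨t, ht, rfl⟩
    exact ⟨fun i => c * t i, fun i => mul_nonneg hc.le (ht i),
      by rw [Finset.smul_sum]; exact Finset.sum_congr rfl fun i _ => smul_smul c (t i) (v i)⟩
  add_mem' := by
    rintro x ⟨t, ht, rfl⟩ z ⟨u, hu, rfl⟩
    exact ⟨fun i => t i + u i, fun i => add_nonneg (ht i) (hu i),
      by rw [← Finset.sum_add_distrib]; exact Finset.sum_congr rfl fun i _ => (add_smul _ _ _).symm⟩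

open scoped InnerProductSpace in
lemma farkas_cone [CompleteSpace E] (v : ι → E) (g : E)
    (h : ∀ y : E, (∀ i, 0 ≤ ⟪v i, y⟫_ℝ) → 0 ≤ ⟪y, g⟫_ℝ) : g ∈ coneSpan v := by
  classical
  by_contra hg
  have hne : (coneSpanCone v : Set E).Nonempty :=
    ⟨0, ⟨0, fun i => le_rfl, by simp⟩⟩
  obtain ⟨y, hy1, hy2⟩ := ProperCone.hyperplane_separation'
    (⟨(coneSpanCone v).toPointedCone ⟨0, fun i => le_rfl, by simp⟩, isClosed_coneSpan v⟩ : ProperCone ℝ E) hg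
  have hvy : ∀ i, 0 ≤ ⟪v i, y⟫_ℝ := by
    intro i
    apply hy1
    exact ⟨fun j => if j = i then 1 else 0, fun j => by positivity, by simp⟩
  linarith [h y hvy, hy2, real_inner_comm g y]

end ConeMachinery



open Matrix

open scoped InnerProductSpace

lemma exists_primal {p n q s : ℕ} {A : Matrix (Fin p) (Fin n) ℝ} {B : Matrix (Fin p) (Fin q) ℝ}
    {D : Matrix (Fin s) (Fin q) ℝ} {b : Fin p → ℝ} {d : Fin s → ℝ}
    {c1 c2 : Fin n → ℝ} {θ1 θ2 : ℝ} {y : Fin q → ℝ}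
    (h : BRefeas A B D b d c1 c2 θ1 θ2 y) :
    ∃ x : Fin n → ℝ, 0 ≤ x ∧ b ≤ A.mulVec x + B.mulVec y ∧ c1 ⬝ᵥ x ≤ θ1 ∧ c2 ⬝ᵥ x ≤ θ2 := by
  classical
  obtain ⟨hd, hy, hF, hO⟩ := h
  set g : EuclideanSpace ℝ (Fin p ⊕ Bool) := WithLp.toLp 2 (fun k => Sum.elim (fun i => b i - B.mulVec y i)
      (fun bo => bif bo then -θ2 else -θ1) k) with hg
  set V : (Fin n ⊕ (Fin p ⊕ Bool)) → EuclideanSpace ℝ (Fin p ⊕ Bool) := fun idx => WithLp.toLp 2 (Sum.elim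
      (fun j => fun k => Sum.elim (fun i => A i j) (fun bo => bif bo then -c2 j else -c1 j) k)
      (fun k0 => fun k => if k = k0 then (-1 : ℝ) else 0) idx) with hV
  have hinner : ∀ u w : EuclideanSpace ℝ (Fin p ⊕ Bool), ⟪u, w⟫_ℝ = ∑ k, u k * w k := by
    intro u w
    rw [PiLp.inner_apply]
    exact Finset.sum_congr rfl fun k _ => by rw [RCLike.inner_apply]; simp [mul_comm]
  have key : g ∈ coneSpan V := by
    apply farkas_cone
    intro y' hy'
    -- nonnegativity of -y'
    have hneg : ∀ k0, y' k0 ≤ 0 := by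
      intro k0
      have := hy' (Sum.inr k0)
      rw [hinner] at this
      simp only [hV, Sum.elim_inr, PiLp.toLp_apply] at this
      rw [Finset.sum_eq_single k0 (by intro k _ hk; simp [hk]) (by simp)] at this
      simp at this
      linarith
    set π : Fin p → ℝ := fun i => -(y' (Sum.inl i)) with hπ
    set μ1 : ℝ := -(y' (Sum.inr false)) with hμ1
    set μ2 : ℝ := -(y' (Sum.inr true)) with hμ2
    have hπ0 : 0 ≤ π := fun i => by simp [hπ]; linarith [hneg (Sum.inl i)]
    have hμ10 : 0 ≤ μ1 := by simp [hμ1]; linarith [hneg (Sum.inr false)]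
    have hμ20 : 0 ≤ μ2 := by simp [hμ2]; linarith [hneg (Sum.inr true)]
    have hcol : ∀ j, Aᵀ.mulVec π j ≤ μ1 * c1 j + μ2 * c2 j := by
      intro j
      have := hy' (Sum.inl j)
      rw [hinner] at this
      simp only [hV, Sum.elim_inl, PiLp.toLp_apply] at this
      rw [Fintype.sum_sum_type] at this
      simp only [Sum.elim_inl, Sum.elim_inr, Fintype.sum_bool] at this
      simp only [Matrix.mulVec, dotProduct, Matrix.transpose_apply, hπ, hμ1, hμ2]
      simp only [cond_true, cond_false] at this
      have : ∑ i, A i j * y' (Sum.inl i) + (-c2 j * y' (Sum.inr true) + -c1 j * y' (Sum.inr false)) ≥ 0 := this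
      have hsum : ∑ i, A i j * -(y' (Sum.inl i)) = -(∑ i, A i j * y' (Sum.inl i)) := by
        rw [← Finset.sum_neg_distrib]; exact Finset.sum_congr rfl fun i _ => by ring
      rw [hsum]
      linarith
    have hdot : π ⬝ᵥ (b - B.mulVec y) ≤ μ1 * θ1 + μ2 * θ2 := by
      rcases eq_or_lt_of_le (add_nonneg hμ10 hμ20) with hμ | hμ
      · have h1 : μ1 = 0 := by linarith
        have h2 : μ2 = 0 := by linarith
        have := hF π hπ0 (fun j => by have := hcol j; rw [h1, h2] at this; simpa using this)
        rw [h1, h2]; linarith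
      · set μ := μ1 + μ2 with hμdef
        have hlam : μ1 / μ ∈ Set.Icc (0 : ℝ) 1 := by
          constructor
          · positivity
          · rw [div_le_one hμ]; linarith
        have h1lam : 1 - μ1 / μ = μ2 / μ := by
          field_simp
          linarith
        have := hO (μ1 / μ) hlam (μ⁻¹ • π)
          (by intro i
              have := hπ0 i
              simp only [Pi.zero_apply] at this
              simp only [Pi.smul_apply, smul_eq_mul, Pi.zero_apply]
              exact mul_nonneg (inv_nonneg.mpr hμ.le) this)
          (by
            intro j
            have hj := hcol j
            have : Aᵀ.mulVec (μ⁻¹ • π) j = μ⁻¹ * Aᵀ.mulVec π j := by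
              simp [Matrix.mulVec, dotProduct, Finset.mul_sum]
              exact Finset.sum_congr rfl fun i _ => by ring
            rw [this]
            simp only [Pi.add_apply, Pi.smul_apply, smul_eq_mul, h1lam]
            rw [div_mul_eq_mul_div, div_mul_eq_mul_div, ← add_div, le_div_iff₀ hμ,
              mul_comm, ← mul_assoc, mul_inv_cancel₀ hμ.ne', one_mul]
            linarith)
        rw [h1lam] at this
        have hsmul : (μ⁻¹ • π) ⬝ᵥ (b - B.mulVec y) = μ⁻¹ * (π ⬝ᵥ (b - B.mulVec y)) := by
          simp [dotProduct, Finset.mul_sum]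
          exact Finset.sum_congr rfl fun i _ => by ring
        rw [hsmul, div_mul_eq_mul_div, div_mul_eq_mul_div, ← add_div] at this
        calc π ⬝ᵥ (b - B.mulVec y) = μ * (μ⁻¹ * (π ⬝ᵥ (b - B.mulVec y))) := by
              field_simp
          _ ≤ μ * ((μ1 * θ1 + μ2 * θ2) / μ) := mul_le_mul_of_nonneg_left this hμ.le
          _ = μ1 * θ1 + μ2 * θ2 := by field_simp
    rw [hinner]
    rw [Fintype.sum_sum_type]
    simp only [Fintype.sum_bool]
    simp only [hg, Sum.elim_inl, Sum.elim_inr, cond_true, cond_false, PiLp.toLp_apply]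
    have hsum : ∑ i, y' (Sum.inl i) * (b i - B.mulVec y i) = -(π ⬝ᵥ (b - B.mulVec y)) := by
      simp only [dotProduct, hπ, Pi.sub_apply, ← Finset.sum_neg_distrib]
      exact Finset.sum_congr rfl fun i _ => by ring
    rw [hsum]
    have : y' (Sum.inr true) * -θ2 + y' (Sum.inr false) * -θ1 = μ2 * θ2 + μ1 * θ1 := by
      simp only [hμ1, hμ2]; ring
    rw [this]
    linarith
  obtain ⟨t, ht, hgt⟩ := key
  have hpt : ∀ k, g k = ∑ i, t i * V i k := by
    intro k
    have : g k = (∑ i, t i • V i) k := by rw [hgt]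
    rw [WithLp.ofLp_sum, Finset.sum_apply] at this
    simpa [Pi.smul_apply, smul_eq_mul] using this
  set x : Fin n → ℝ := fun j => t (Sum.inl j) with hx
  have hslack : ∀ k0, ∑ kk : Fin p ⊕ Bool, t (Sum.inr kk) * (if (k0 : Fin p ⊕ Bool) = kk then (-1:ℝ) else 0) = -(t (Sum.inr k0)) := by
    intro k0
    rw [Finset.sum_eq_single k0 (by intro k _ hk; simp [Ne.symm hk]) (by simp)]
    simp
  refine ⟨x, fun j => ht (Sum.inl j), ?_, ?_, ?_⟩
  · intro i
    have := hpt (Sum.inl i)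
    rw [Fintype.sum_sum_type] at this
    simp only [hV, Sum.elim_inl, Sum.elim_inr, hg, PiLp.toLp_apply] at this
    rw [hslack (Sum.inl i)] at this
    have hAx : A.mulVec x i = ∑ j, t (Sum.inl j) * A i j := by
      simp only [Matrix.mulVec, dotProduct, hx]
      exact Finset.sum_congr rfl fun j _ => by ring
    simp only [Pi.add_apply]
    have h0 := ht (Sum.inr (Sum.inl i))
    rw [hAx]
    linarith [this]
  · have := hpt (Sum.inr false)
    rw [Fintype.sum_sum_type] at this
    simp only [hV, Sum.elim_inl, Sum.elim_inr, hg, cond_false, PiLp.toLp_apply] at this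
    rw [hslack (Sum.inr false)] at this
    have hc : ∑ j, t (Sum.inl j) * -c1 j = -(c1 ⬝ᵥ x) := by
      simp only [dotProduct, hx]
      rw [← Finset.sum_neg_distrib]
      exact Finset.sum_congr rfl fun j _ => by ring
    have h0 := ht (Sum.inr (Sum.inr false))
    rw [hc] at this
    linarith [this]
  · have := hpt (Sum.inr true)
    rw [Fintype.sum_sum_type] at this
    simp only [hV, Sum.elim_inl, Sum.elim_inr, hg, cond_true, PiLp.toLp_apply] at this
    rw [hslack (Sum.inr true)] at this
    have hc : ∑ j, t (Sum.inl j) * -c2 j = -(c2 ⬝ᵥ x) := by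
      simp only [dotProduct, hx]
      rw [← Finset.sum_neg_distrib]
      exact Finset.sum_congr rfl fun j _ => by ring
    have h0 := ht (Sum.inr (Sum.inr true))
    rw [hc] at this
    linarith [this]

lemma dot_mono_left {m : ℕ} {u v w : Fin m → ℝ} (h : u ≤ v) (hw : 0 ≤ w) :
    w ⬝ᵥ u ≤ w ⬝ᵥ v :=
  Finset.sum_le_sum fun i _ => mul_le_mul_of_nonneg_left (h i) (hw i)

lemma dot_mono_right {m : ℕ} {u v w : Fin m → ℝ} (h : u ≤ v) (hw : 0 ≤ w) :
    u ⬝ᵥ w ≤ v ⬝ᵥ w :=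
  Finset.sum_le_sum fun i _ => mul_le_mul_of_nonneg_right (h i) (hw i)

lemma refeas_of_feas {p n q s : ℕ} {A : Matrix (Fin p) (Fin n) ℝ} {B : Matrix (Fin p) (Fin q) ℝ}
    {D : Matrix (Fin s) (Fin q) ℝ} {b : Fin p → ℝ} {d : Fin s → ℝ}
    {c1 c2 : Fin n → ℝ} {x : Fin n → ℝ} {y : Fin q → ℝ}
    (hf : BFeas A B D b d x y) :
    BRefeas A B D b d c1 c2 (c1 ⬝ᵥ x) (c2 ⬝ᵥ x) y := by
  obtain ⟨hb, hd, hx, hy⟩ := hf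
  have hkey : ∀ π : Fin p → ℝ, 0 ≤ π → π ⬝ᵥ (b - B.mulVec y) ≤ (Aᵀ.mulVec π) ⬝ᵥ x := by
    intro π hπ
    have h1 : b - B.mulVec y ≤ A.mulVec x := by
      intro i
      have := hb i
      simp only [Pi.add_apply] at this
      simp only [Pi.sub_apply]
      linarith
    calc π ⬝ᵥ (b - B.mulVec y) ≤ π ⬝ᵥ (A.mulVec x) := dot_mono_left h1 hπ
    _ = (Aᵀ.mulVec π) ⬝ᵥ x := by
        rw [Matrix.dotProduct_mulVec, Matrix.mulVec_transpose]
  refine ⟨hd, hy, ?_, ?_⟩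
  · intro π hπ hAπ
    refine le_trans (hkey π hπ) (le_trans (dot_mono_right hAπ hx) ?_)
    simp [zero_dotProduct]
  · intro lam _ π hπ hAπ
    refine le_trans (hkey π hπ) (le_trans (dot_mono_right hAπ hx) ?_)
    rw [add_dotProduct, smul_dotProduct, smul_dotProduct]
    simp [smul_eq_mul]

/-- The non-dominated set of the BLP coincides with the non-dominated set of its
Benders reformulation. -/
theorem nondominated_sets_coincide
    {p n q s : ℕ} (A : Matrix (Fin p) (Fin n) ℝ) (B : Matrix (Fin p) (Fin q) ℝ)
    (D : Matrix (Fin s) (Fin q) ℝ) (b : Fin p → ℝ) (d : Fin s → ℝ)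
    (c1 c2 : Fin n → ℝ) (f1 f2 : Fin q → ℝ) :
    {z : ℝ × ℝ | ∃ x : Fin n → ℝ, ∃ y : Fin q → ℝ, BFeas A B D b d x y ∧
      (¬ ∃ x' y', BFeas A B D b d x' y' ∧
        c1 ⬝ᵥ x' + f1 ⬝ᵥ y' ≤ c1 ⬝ᵥ x + f1 ⬝ᵥ y ∧
        c2 ⬝ᵥ x' + f2 ⬝ᵥ y' ≤ c2 ⬝ᵥ x + f2 ⬝ᵥ y ∧
        (c1 ⬝ᵥ x' + f1 ⬝ᵥ y', c2 ⬝ᵥ x' + f2 ⬝ᵥ y') ≠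
          (c1 ⬝ᵥ x + f1 ⬝ᵥ y, c2 ⬝ᵥ x + f2 ⬝ᵥ y)) ∧
      z = (c1 ⬝ᵥ x + f1 ⬝ᵥ y, c2 ⬝ᵥ x + f2 ⬝ᵥ y)} =
    {w : ℝ × ℝ | ∃ θ1 θ2 : ℝ, ∃ y : Fin q → ℝ, BRefeas A B D b d c1 c2 θ1 θ2 y ∧
      (¬ ∃ θ1' θ2' : ℝ, ∃ y' : Fin q → ℝ, BRefeas A B D b d c1 c2 θ1' θ2' y' ∧
        θ1' + f1 ⬝ᵥ y' ≤ θ1 + f1 ⬝ᵥ y ∧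
        θ2' + f2 ⬝ᵥ y' ≤ θ2 + f2 ⬝ᵥ y ∧
        (θ1' + f1 ⬝ᵥ y', θ2' + f2 ⬝ᵥ y') ≠ (θ1 + f1 ⬝ᵥ y, θ2 + f2 ⬝ᵥ y)) ∧
      w = (θ1 + f1 ⬝ᵥ y, θ2 + f2 ⬝ᵥ y)} := by

  ext z
  simp only [Set.mem_setOf_eq]
  constructor
  · rintro ⟨x, y, hfeas, heff, rfl⟩
    refine ⟨c1 ⬝ᵥ x, c2 ⬝ᵥ x, y, refeas_of_feas hfeas, ?_, rfl⟩
    rintro ⟨θ1', θ2', y', hre', h1, h2, hne⟩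
    obtain ⟨x', hx'0, hb', hc1', hc2'⟩ := exists_primal hre'
    have hfeas' : BFeas A B D b d x' y' := ⟨hb', hre'.1, hx'0, hre'.2.1⟩
    have hz1 : c1 ⬝ᵥ x' + f1 ⬝ᵥ y' ≤ c1 ⬝ᵥ x + f1 ⬝ᵥ y := by linarith
    have hz2 : c2 ⬝ᵥ x' + f2 ⬝ᵥ y' ≤ c2 ⬝ᵥ x + f2 ⬝ᵥ y := by linarith
    by_cases hcase : (c1 ⬝ᵥ x' + f1 ⬝ᵥ y', c2 ⬝ᵥ x' + f2 ⬝ᵥ y') =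
        (c1 ⬝ᵥ x + f1 ⬝ᵥ y, c2 ⬝ᵥ x + f2 ⬝ᵥ y)
    · apply hne
      have e1 := congrArg Prod.fst hcase
      have e2 := congrArg Prod.snd hcase
      simp only at e1 e2
      have : θ1' + f1 ⬝ᵥ y' = c1 ⬝ᵥ x + f1 ⬝ᵥ y := le_antisymm h1 (by linarith)
      have : θ2' + f2 ⬝ᵥ y' = c2 ⬝ᵥ x + f2 ⬝ᵥ y := le_antisymm h2 (by linarith)
      ext <;> simp <;> linarith
    · exact heff ⟨x', y', hfeas', hz1, hz2, hcase⟩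
  · rintro ⟨θ1, θ2, y, hre, heff, rfl⟩
    obtain ⟨x, hx0, hb', hc1, hc2⟩ := exists_primal hre
    have hfeas : BFeas A B D b d x y := ⟨hb', hre.1, hx0, hre.2.1⟩
    have heq1 : c1 ⬝ᵥ x = θ1 ∧ c2 ⬝ᵥ x = θ2 := by
      by_contra hcon
      apply heff
      refine ⟨c1 ⬝ᵥ x, c2 ⬝ᵥ x, y, refeas_of_feas hfeas, by linarith, by linarith, ?_⟩
      intro hc
      have e1 := congrArg Prod.fst hc
      have e2 := congrArg Prod.snd hc
      simp only at e1 e2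
      exact hcon ⟨by linarith, by linarith⟩
    obtain ⟨he1, he2⟩ := heq1
    refine ⟨x, y, hfeas, ?_, by rw [he1, he2]⟩
    rintro ⟨x', y', hfeas', h1, h2, hne⟩
    apply heff
    refine ⟨c1 ⬝ᵥ x', c2 ⬝ᵥ x', y', refeas_of_feas hfeas', by linarith, by linarith, ?_⟩
    intro hc
    apply hne
    have e1 := congrArg Prod.fst hc
    have e2 := congrArg Prod.snd hc
    simp only at e1 e2
    ext <;> simp <;> linarith
end

section
/- (Finitely many weighting values suffice.) Let l ≥ 1 and let 1 = a₀ ≥ a₁ ≥ … ≥ a_l = 0 be real numbers, and suppose for each i ∈ {0,…,l−1} there is a point (xⁱ, yⁱ) ∈ F that minimizes the λ-weighted objective λz₁ + (1−λ)z₂ over F for every λ ∈ [a_{i+1}, a_i]. Let R_fin be defined like R but with the weighted optimality cuts imposed only for λ ∈ {a₀, a₁, …, a_l} (together with all ray cuts). Then for each i ∈ {0,…,l−1} and every λ ∈ [a_{i+1}, a_i], the lifted point (c¹·xⁱ, c²·xⁱ, yⁱ) belongs to R_fin and minimizes λw₁ + (1−λ)w₂ over R_fin. -/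
open Matrix

/-- Feasible set of the Benders reformulation where the weighted optimality cuts are
imposed only for the finitely many weights `a 0, …, a l` (together with all ray cuts). -/
def BRefeasFin {p n q s l : ℕ} (A : Matrix (Fin p) (Fin n) ℝ) (B : Matrix (Fin p) (Fin q) ℝ)
    (D : Matrix (Fin s) (Fin q) ℝ) (b : Fin p → ℝ) (d : Fin s → ℝ)
    (c1 c2 : Fin n → ℝ) (a : Fin (l + 1) → ℝ) (θ1 θ2 : ℝ) (y : Fin q → ℝ) : Prop :=
  d ≤ D.mulVec y ∧ 0 ≤ y ∧
  (∀ π : Fin p → ℝ, 0 ≤ π → Aᵀ.mulVec π ≤ 0 → π ⬝ᵥ (b - B.mulVec y) ≤ 0) ∧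
  (∀ i : Fin (l + 1), ∀ π : Fin p → ℝ, 0 ≤ π →
    Aᵀ.mulVec π ≤ a i • c1 + (1 - a i) • c2 →
    π ⬝ᵥ (b - B.mulVec y) ≤ a i * θ1 + (1 - a i) * θ2)


lemma nonneg_orthant_closed {k : ℕ} : IsClosed {c : Fin k → ℝ | 0 ≤ c} := by
  have : {c : Fin k → ℝ | 0 ≤ c} = ⋂ i, {c : Fin k → ℝ | 0 ≤ c i} := by
    ext c; simp [Pi.le_def, Set.mem_iInter]
  rw [this]
  exact isClosed_iInter fun i => isClosed_le continuous_const (continuous_apply i)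

lemma cone_isClosed {E : Type*} [NormedAddCommGroup E] [NormedSpace ℝ E]
    [FiniteDimensional ℝ E] :
    ∀ (k : ℕ) (v : Fin k → E),
      IsClosed {u : E | ∃ c : Fin k → ℝ, 0 ≤ c ∧ ∑ i, c i • v i = u} := by
  intro k
  induction k with
  | zero =>
    intro v
    have : {u : E | ∃ c : Fin 0 → ℝ, 0 ≤ c ∧ ∑ i, c i • v i = u} = {0} := by
      ext u
      constructor
      · rintro ⟨c, -, rfl⟩; simp
      · rintro rfl; exact ⟨0, le_refl _, by simp⟩
    rw [this]; exact isClosed_singleton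
  | succ k ih =>
    intro v
    by_cases hli : LinearIndependent ℝ v
    · set f : (Fin (k+1) → ℝ) →ₗ[ℝ] E :=
        { toFun := fun c => ∑ i, c i • v i
          map_add' := by intro a b; simp [add_smul, Finset.sum_add_distrib]
          map_smul' := by intro m a; simp [smul_smul, Finset.smul_sum] }
      have hker : LinearMap.ker f = ⊥ := by
        rw [LinearMap.ker_eq_bot']
        intro m hm
        have := Fintype.linearIndependent_iff.mp hli m hm
        funext i; exact this i
      have hce := LinearMap.isClosedEmbedding_of_injective (f := f) hker
      have himg : {u : E | ∃ c : Fin (k+1) → ℝ, 0 ≤ c ∧ ∑ i, c i • v i = u}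
          = f '' {c | 0 ≤ c} := by
        ext u
        simp only [Set.mem_image, Set.mem_setOf_eq]
        constructor
        · rintro ⟨c, hc, rfl⟩; exact ⟨c, hc, rfl⟩
        · rintro ⟨c, hc, rfl⟩; exact ⟨c, hc, rfl⟩
      rw [himg]
      exact hce.isClosedMap _ nonneg_orthant_closed
    · obtain ⟨g0, hg0, i0, hi0⟩ := Fintype.not_linearIndependent_iff.mp hli
      obtain ⟨g, hg, j0, hj0⟩ :
          ∃ g : Fin (k+1) → ℝ, ∑ i, g i • v i = 0 ∧ ∃ j, g j < 0 := by
        rcases lt_or_gt_of_ne hi0 with h | h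
        · exact ⟨g0, hg0, i0, h⟩
        · exact ⟨-g0, by simp [neg_smul, Finset.sum_neg_distrib, hg0], i0, by simpa using h⟩
      have hset : {u : E | ∃ c : Fin (k+1) → ℝ, 0 ≤ c ∧ ∑ i, c i • v i = u}
          = ⋃ (j : Fin (k+1)) (_ : g j < 0),
              {u : E | ∃ c : Fin k → ℝ, 0 ≤ c ∧ ∑ i, c i • v (j.succAbove i) = u} := by
        ext u
        simp only [Set.mem_iUnion, Set.mem_setOf_eq]
        constructor
        · rintro ⟨c, hc, rfl⟩
          have hc' : ∀ m, (0:ℝ) ≤ c m := fun m => by simpa using hc m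
          have hne : ({j | g j < 0} : Finset (Fin (k+1))).Nonempty :=
            ⟨j0, by simpa using hj0⟩
          obtain ⟨js, hjs, hmin⟩ :=
            Finset.exists_min_image ({j | g j < 0} : Finset (Fin (k+1)))
              (fun j => c j / (-g j)) hne
          have hgjs : g js < 0 := by simpa using hjs
          set t : ℝ := c js / (-g js) with ht
          have ht0 : 0 ≤ t := div_nonneg (hc' js) (by linarith)
          have hcc : ∀ m, 0 ≤ c m + t * g m := by
            intro m
            rcases le_or_gt 0 (g m) with hgm | hgm
            · have h1 : 0 ≤ t * g m := mul_nonneg ht0 hgm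
              have h2 := hc' m; linarith
            · have hm' : t ≤ c m / (-g m) := hmin m (by simpa using hgm)
              have hpos : (0:ℝ) < -g m := by linarith
              rw [le_div_iff₀ hpos] at hm'
              nlinarith
          have hne0g : g js ≠ 0 := ne_of_lt hgjs
          have hzero : c js + t * g js = 0 := by
            rw [ht, div_mul_eq_mul_div, div_neg, mul_div_assoc, div_self hne0g]
            ring
          have hsum : ∑ m, (c m + t * g m) • v m = ∑ m, c m • v m := by
            simp only [add_smul, Finset.sum_add_distrib]
            have h0 : ∑ m, (t * g m) • v m = 0 := by
              simp only [mul_smul]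
              rw [← Finset.smul_sum, hg, smul_zero]
            rw [h0, add_zero]
          rw [Fin.sum_univ_succAbove (fun m => (c m + t * g m) • v m) js] at hsum
          rw [hzero, zero_smul, zero_add] at hsum
          exact ⟨js, hgjs, fun i => c (js.succAbove i) + t * g (js.succAbove i),
            fun i => hcc _, hsum⟩
        · rintro ⟨j, hj, c, hc, rfl⟩
          have hcins : ∃ c' : Fin (k+1) → ℝ, c' = j.insertNth 0 c := ⟨_, rfl⟩
          obtain ⟨c', hc'⟩ := hcins
          refine ⟨c', ?_, ?_⟩
          · intro m
            rcases eq_or_ne m j with rfl | hm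
            · simp [hc']
            · obtain ⟨i, rfl⟩ := Fin.exists_succAbove_eq hm
              simpa [hc'] using hc i
          · have hrw : ∑ i : Fin (k+1), c' i • v i
                = c' j • v j + ∑ i : Fin k, c' (j.succAbove i) • v (j.succAbove i) :=
              Fin.sum_univ_succAbove (fun m => c' m • v m) j
            rw [hrw]
            simp [hc']
      rw [hset]
      refine isClosed_iUnion_of_finite fun j => isClosed_iUnion_of_finite fun _ => ih _

section FarkasCore

variable {ι κ : Type*} [Fintype ι] [Fintype κ]

lemma cone_isClosed' {E : Type*} [NormedAddCommGroup E] [NormedSpace ℝ E]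
    [FiniteDimensional ℝ E] (v : κ → E) :
    IsClosed {u : E | ∃ c : κ → ℝ, (∀ j, 0 ≤ c j) ∧ ∑ j, c j • v j = u} := by
  classical
  set e := Fintype.equivFin κ with he
  have hset : {u : E | ∃ c : κ → ℝ, (∀ j, 0 ≤ c j) ∧ ∑ j, c j • v j = u}
      = {u : E | ∃ c : Fin (Fintype.card κ) → ℝ, 0 ≤ c ∧ ∑ i, c i • v (e.symm i) = u} := by
    ext u
    constructor
    · rintro ⟨c, hc, rfl⟩
      refine ⟨fun i => c (e.symm i), fun i => hc _, ?_⟩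
      exact Equiv.sum_comp e.symm (fun j => c j • v j)
    · rintro ⟨c, hc, rfl⟩
      refine ⟨fun j => c (e j), fun j => hc _, ?_⟩
      rw [← Equiv.sum_comp e.symm (fun j => c (e j) • v j)]
      simp
  rw [hset]
  exact cone_isClosed _ _

lemma esum_apply {ι' κ' : Type*} (s : Finset κ') (f : κ' → EuclideanSpace ℝ ι') (i : ι') :
    (∑ j ∈ s, f j) i = ∑ j ∈ s, f j i := by
  classical
  induction s using Finset.induction with
  | empty => rfl
  | @insert _ _ h ih => rw [Finset.sum_insert h, Finset.sum_insert h, PiLp.add_apply, ih]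

open scoped InnerProductSpace in
lemma farkas_cone_s3 (v : κ → EuclideanSpace ℝ ι) (b : EuclideanSpace ℝ ι)
    (hb : ¬ ∃ c : κ → ℝ, (∀ j, 0 ≤ c j) ∧ ∑ j, c j • v j = b) :
    ∃ π : ι → ℝ, (∀ j, ∑ i, v j i * π i ≤ 0) ∧ 0 < ∑ i, b i * π i := by
  classical
  set K : ConvexCone ℝ (EuclideanSpace ℝ ι) :=
    { carrier := {u | ∃ c : κ → ℝ, (∀ j, 0 ≤ c j) ∧ ∑ j, c j • v j = u}
      smul_mem' := by
        rintro t ht u ⟨c, hc, rfl⟩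
        exact ⟨fun j => t * c j, fun j => mul_nonneg ht.le (hc j),
          by rw [Finset.smul_sum]; simp [smul_smul]⟩
      add_mem' := by
        rintro u ⟨c, hc, rfl⟩ w ⟨c', hc', rfl⟩
        exact ⟨fun j => c j + c' j, fun j => add_nonneg (hc j) (hc' j),
          by simp [add_smul, Finset.sum_add_distrib]⟩ } with hK
  have hne : (K : Set (EuclideanSpace ℝ ι)).Nonempty :=
    ⟨0, ⟨0, fun j => le_refl _, by simp⟩⟩
  have hcl : IsClosed (K : Set (EuclideanSpace ℝ ι)) := cone_isClosed' v
  have hbK : b ∉ K := fun h => hb h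
  obtain ⟨y, hy1, hy2⟩ : ∃ y, (∀ x ∈ K, 0 ≤ ⟪y, x⟫_ℝ) ∧ ⟪b, y⟫_ℝ < 0 := by
    let C : ProperCone ℝ (EuclideanSpace ℝ ι) :=
      { carrier := K
        add_mem' := fun ha hb => K.add_mem ha hb
        zero_mem' := ⟨0, fun _ => le_refl _, by simp⟩
        smul_mem' := by
          rintro c u ⟨cc, hc, rfl⟩
          exact ⟨fun j => (c:ℝ) * cc j, fun j => mul_nonneg c.2 (hc j),
            by
              rw [Finset.smul_sum]
              refine Finset.sum_congr rfl fun j _ => ?_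
              rw [mul_smul]; rfl⟩
        isClosed' := hcl }
    obtain ⟨z, hz1, hz2⟩ := C.hyperplane_separation' (x₀ := b) hbK
    exact ⟨z, fun x hx => by rw [real_inner_comm]; exact hz1 x hx, hz2⟩
  refine ⟨fun i => -(y i), fun j => ?_, ?_⟩
  · have hvj : v j ∈ K := by
      refine ⟨fun j' => if j' = j then 1 else 0, fun j' => by positivity, ?_⟩
      simp [ite_smul]
    have := hy1 _ hvj
    rw [PiLp.inner_apply] at this
    simp only [RCLike.inner_apply, starRingEnd_apply, star_trivial] at this
    simp only [mul_neg, Finset.sum_neg_distrib]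
    linarith
  · rw [PiLp.inner_apply] at hy2
    simp only [RCLike.inner_apply, starRingEnd_apply, star_trivial] at hy2
    have h3 : ∑ i, b i * -(y i) = -(∑ i, y i * b i) := by
      simp [mul_neg, Finset.sum_neg_distrib, mul_comm]
    rw [h3]
    linarith

lemma farkas_ineq (M : Matrix ι κ ℝ) (b : ι → ℝ)
    (h : ¬ ∃ x : κ → ℝ, 0 ≤ x ∧ b ≤ M.mulVec x) :
    ∃ π : ι → ℝ, 0 ≤ π ∧ Mᵀ.mulVec π ≤ 0 ∧ 0 < b ⬝ᵥ π := by
  classical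
  set v : κ ⊕ ι → EuclideanSpace ℝ ι :=
    Sum.elim (fun j => (WithLp.toLp 2 (fun i => M i j) : EuclideanSpace ℝ ι))
      (fun i' => (WithLp.toLp 2 (fun i => if i = i' then (-1:ℝ) else 0) : EuclideanSpace ℝ ι)) with hv
  have hb : ¬ ∃ c : κ ⊕ ι → ℝ, (∀ j, 0 ≤ c j) ∧ ∑ j, c j • v j = (WithLp.toLp 2 b : EuclideanSpace ℝ ι) := by
    rintro ⟨c, hc, hsum⟩
    apply h
    refine ⟨fun j => c (Sum.inl j), fun j => hc _, ?_⟩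
    intro i
    have hcoord : ∑ j : κ ⊕ ι, (c j • v j) i = b i := by
      rw [← esum_apply]; exact congrArg (fun u : EuclideanSpace ℝ ι => u i) hsum
    rw [Fintype.sum_sum_type] at hcoord
    simp only [PiLp.smul_apply, smul_eq_mul, hv, Sum.elim_inl, Sum.elim_inr, PiLp.toLp_apply] at hcoord
    have h2 : ∑ i', c (Sum.inr i') * (if i = i' then (-1:ℝ) else 0)
        = -(c (Sum.inr i)) := by
      rw [Finset.sum_eq_single i]
      · simp
      · intro b' _ hb'; simp [Ne.symm hb']
      · intro hi; exact absurd (Finset.mem_univ i) hi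
    rw [h2] at hcoord
    have : M.mulVec (fun j => c (Sum.inl j)) i = b i + c (Sum.inr i) := by
      simp only [Matrix.mulVec, dotProduct]
      rw [show ∑ j, M i j * c (Sum.inl j) = ∑ j, c (Sum.inl j) * M i j from
        Finset.sum_congr rfl (fun j _ => mul_comm _ _)]
      linarith
    rw [this]
    linarith [hc (Sum.inr i)]
  obtain ⟨π, hπ1, hπ2⟩ := farkas_cone_s3 v (WithLp.toLp 2 b) hb
  refine ⟨π, ?_, ?_, ?_⟩
  · intro i'
    have := hπ1 (Sum.inr i')
    simp only [hv, Sum.elim_inr, PiLp.toLp_apply] at this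
    have h2 : ∑ i, (if i = i' then (-1:ℝ) else 0) * π i = -(π i') := by
      rw [Finset.sum_eq_single i']
      · simp
      · intro b' _ hb'; simp [hb']
      · intro hi; exact absurd (Finset.mem_univ i') hi
    rw [h2] at this
    have h0 : (0:(ι → ℝ)) i' = 0 := rfl
    simp only [Pi.zero_apply]
    linarith
  · intro j
    have := hπ1 (Sum.inl j)
    simp only [hv, Sum.elim_inl, PiLp.toLp_apply] at this
    simpa [Matrix.mulVec, dotProduct, Matrix.transpose_apply] using this
  · exact hπ2

end FarkasCore

lemma dot_le_dot_right {ι : Type*} [Fintype ι] {u v w : ι → ℝ} (h : u ≤ v) (hw : 0 ≤ w) :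
    u ⬝ᵥ w ≤ v ⬝ᵥ w :=
  Finset.sum_le_sum fun i _ => mul_le_mul_of_nonneg_right (h i) (hw i)

lemma dot_le_dot_left {ι : Type*} [Fintype ι] {w u v : ι → ℝ} (h : u ≤ v) (hw : 0 ≤ w) :
    w ⬝ᵥ u ≤ w ⬝ᵥ v :=
  Finset.sum_le_sum fun i _ => mul_le_mul_of_nonneg_left (h i) (hw i)

lemma dual_bound {ι κ : Type*} [Fintype ι] [Fintype κ] (A : Matrix ι κ ℝ) (b : ι → ℝ)
    (c : κ → ℝ) (γ : ℝ)
    (hfeas : ∃ x : κ → ℝ, 0 ≤ x ∧ b ≤ A.mulVec x)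
    (hlb : ∀ x : κ → ℝ, 0 ≤ x → b ≤ A.mulVec x → γ ≤ c ⬝ᵥ x)
    (ε : ℝ) (hε : 0 < ε) :
    ∃ π : ι → ℝ, 0 ≤ π ∧ Aᵀ.mulVec π ≤ c ∧ γ - ε < b ⬝ᵥ π := by
  classical
  set M : Matrix (ι ⊕ Unit) κ ℝ :=
    Matrix.of (fun i j => Sum.elim (fun i' => A i' j) (fun _ => -c j) i) with hM
  set b' : ι ⊕ Unit → ℝ := Sum.elim b (fun _ => ε - γ) with hb'
  have hinf : ¬ ∃ x : κ → ℝ, 0 ≤ x ∧ b' ≤ M.mulVec x := by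
    rintro ⟨x, hx, hxle⟩
    have h1 : b ≤ A.mulVec x := fun i => by
      have := hxle (Sum.inl i)
      simpa [hb', hM, Matrix.mulVec, dotProduct] using this
    have h2 : ε - γ ≤ -(c ⬝ᵥ x) := by
      have := hxle (Sum.inr ())
      simpa [hb', hM, Matrix.mulVec, dotProduct, Finset.sum_neg_distrib,
        neg_mul] using this
    have := hlb x hx h1
    rw [dotProduct] at this
    rw [dotProduct] at h2
    linarith
  obtain ⟨PP, hP0, hP1, hP2⟩ := farkas_ineq M b' hinf
  set π0 : ι → ℝ := fun i => PP (Sum.inl i) with hπ0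
  set t : ℝ := PP (Sum.inr ()) with htdef
  have ht0 : 0 ≤ t := hP0 _
  have hAt : ∀ j, Aᵀ.mulVec π0 j ≤ t * c j := by
    intro j
    have h0 := hP1 j
    rw [Matrix.mulVec, dotProduct, Fintype.sum_sum_type] at h0
    simp only [Matrix.transpose_apply, hM, Matrix.of_apply, Sum.elim_inl, Sum.elim_inr,
      Finset.univ_unique, Finset.sum_singleton, PUnit.default_eq_unit, Pi.zero_apply] at h0
    simp only [Matrix.mulVec, dotProduct, Matrix.transpose_apply, hπ0]
    rw [← htdef] at h0
    linarith
  have hbv : b ⬝ᵥ π0 + (ε - γ) * t = b' ⬝ᵥ PP := by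
    rw [dotProduct, dotProduct, Fintype.sum_sum_type]
    simp [hb', hπ0, htdef, mul_comm]
  rcases eq_or_lt_of_le ht0 with ht | ht
  · exfalso
    obtain ⟨x0, hx00, hx0⟩ := hfeas
    have hb0 : b ⬝ᵥ π0 ≤ (A.mulVec x0) ⬝ᵥ π0 :=
      dot_le_dot_right hx0 (fun i => hP0 _)
    have hswap : (A.mulVec x0) ⬝ᵥ π0 = (Aᵀ.mulVec π0) ⬝ᵥ x0 := by
      rw [Matrix.mulVec_transpose, ← dotProduct_mulVec, dotProduct_comm]
    have hle0 : (Aᵀ.mulVec π0) ⬝ᵥ x0 ≤ 0 := by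
      have hA0 : Aᵀ.mulVec π0 ≤ 0 := fun j => by
        have := hAt j; rw [← ht] at this; simpa using this
      calc (Aᵀ.mulVec π0) ⬝ᵥ x0 ≤ (0 : κ → ℝ) ⬝ᵥ x0 := dot_le_dot_right hA0 hx00
        _ = 0 := by simp
    have heq : b' ⬝ᵥ PP = b ⬝ᵥ π0 := by rw [← hbv, ← ht]; ring
    rw [heq] at hP2
    linarith
  · have htne : t ≠ 0 := ne_of_gt ht
    refine ⟨fun i => t⁻¹ * π0 i, fun i => mul_nonneg (inv_nonneg.mpr ht0) (hP0 _), ?_, ?_⟩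
    · intro j
      have h1 := hAt j
      have h2 : Aᵀ.mulVec (fun i => t⁻¹ * π0 i) j = t⁻¹ * Aᵀ.mulVec π0 j := by
        simp only [Matrix.mulVec, dotProduct, Finset.mul_sum]
        exact Finset.sum_congr rfl fun i _ => by ring
      rw [h2]
      have h3 : t⁻¹ * (t * c j) = c j := by field_simp
      calc t⁻¹ * Aᵀ.mulVec π0 j ≤ t⁻¹ * (t * c j) :=
            mul_le_mul_of_nonneg_left h1 (inv_nonneg.mpr ht0)
        _ = c j := h3
    · have h3 : b ⬝ᵥ (fun i => t⁻¹ * π0 i) = t⁻¹ * (b ⬝ᵥ π0) := by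
        simp only [dotProduct, Finset.mul_sum]
        exact Finset.sum_congr rfl fun i _ => by ring
      rw [h3]
      have h4 : (γ - ε) * t < b ⬝ᵥ π0 := by nlinarith [hP2, hbv]
      have h5 : t⁻¹ * ((γ - ε) * t) = γ - ε := by field_simp
      calc γ - ε = t⁻¹ * ((γ - ε) * t) := h5.symm
        _ < t⁻¹ * (b ⬝ᵥ π0) := (mul_lt_mul_iff_right₀ (inv_pos.mpr ht)).mpr h4

/-- Finitely many weighting values suffice: if `1 = a₀ ≥ a₁ ≥ … ≥ a_l = 0` and for each
`i` the point `(xⁱ, yⁱ) ∈ F` minimizes the `λ`-weighted BLP objective for every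
`λ ∈ [a_{i+1}, a_i]`, then for each `i` and each such `λ` the lifted point
`(c¹·xⁱ, c²·xⁱ, yⁱ)` belongs to `R_fin` and minimizes `λw₁ + (1−λ)w₂` over `R_fin`. -/
theorem finitely_many_weights_suffice
    {p n q s : ℕ} (l : ℕ) (hl : 1 ≤ l)
    (A : Matrix (Fin p) (Fin n) ℝ) (B : Matrix (Fin p) (Fin q) ℝ)
    (D : Matrix (Fin s) (Fin q) ℝ) (b : Fin p → ℝ) (d : Fin s → ℝ)
    (c1 c2 : Fin n → ℝ) (f1 f2 : Fin q → ℝ)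
    (a : Fin (l + 1) → ℝ) (ha0 : a 0 = 1) (hal : a (Fin.last l) = 0)
    (hdec : ∀ i j : Fin (l + 1), i ≤ j → a j ≤ a i)
    (x : Fin l → Fin n → ℝ) (y : Fin l → Fin q → ℝ)
    (hfeas : ∀ i : Fin l, BFeas A B D b d (x i) (y i))
    (hopt : ∀ i : Fin l, ∀ lam ∈ Set.Icc (a i.succ) (a i.castSucc),
      ∀ x' : Fin n → ℝ, ∀ y' : Fin q → ℝ, BFeas A B D b d x' y' →
        lam * (c1 ⬝ᵥ x i + f1 ⬝ᵥ y i) + (1 - lam) * (c2 ⬝ᵥ x i + f2 ⬝ᵥ y i) ≤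
          lam * (c1 ⬝ᵥ x' + f1 ⬝ᵥ y') + (1 - lam) * (c2 ⬝ᵥ x' + f2 ⬝ᵥ y')) :
    ∀ i : Fin l, ∀ lam ∈ Set.Icc (a i.succ) (a i.castSucc),
      BRefeasFin A B D b d c1 c2 a (c1 ⬝ᵥ x i) (c2 ⬝ᵥ x i) (y i) ∧
      ∀ θ1 θ2 : ℝ, ∀ y' : Fin q → ℝ, BRefeasFin A B D b d c1 c2 a θ1 θ2 y' →
        lam * ((c1 ⬝ᵥ x i) + f1 ⬝ᵥ y i) + (1 - lam) * ((c2 ⬝ᵥ x i) + f2 ⬝ᵥ y i) ≤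
          lam * (θ1 + f1 ⬝ᵥ y') + (1 - lam) * (θ2 + f2 ⬝ᵥ y') := by
  intro i lam hlam
  obtain ⟨hb1, hd1, hx1, hy1⟩ := hfeas i
  have hsub : b - B.mulVec (y i) ≤ A.mulVec (x i) := by
    intro idx
    have := hb1 idx
    simp only [Pi.sub_apply, Pi.add_apply] at *
    linarith
  constructor
  · refine ⟨hd1, hy1, ?_, ?_⟩
    · intro π hπ hAπ
      have h1 : π ⬝ᵥ (b - B.mulVec (y i)) ≤ π ⬝ᵥ A.mulVec (x i) := dot_le_dot_left hsub hπ
      have h2 : π ⬝ᵥ A.mulVec (x i) = (Aᵀ.mulVec π) ⬝ᵥ x i := by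
        rw [dotProduct_mulVec, ← Matrix.mulVec_transpose]
      have h3 : (Aᵀ.mulVec π) ⬝ᵥ x i ≤ (0 : Fin n → ℝ) ⬝ᵥ x i := dot_le_dot_right hAπ hx1
      have h4 : (0 : Fin n → ℝ) ⬝ᵥ x i = 0 := by simp
      linarith
    · intro j π hπ hAπ
      have h1 : π ⬝ᵥ (b - B.mulVec (y i)) ≤ π ⬝ᵥ A.mulVec (x i) := dot_le_dot_left hsub hπ
      have h2 : π ⬝ᵥ A.mulVec (x i) = (Aᵀ.mulVec π) ⬝ᵥ x i := by
        rw [dotProduct_mulVec, ← Matrix.mulVec_transpose]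
      have h3 : (Aᵀ.mulVec π) ⬝ᵥ x i ≤ (a j • c1 + (1 - a j) • c2) ⬝ᵥ x i :=
        dot_le_dot_right hAπ hx1
      have h4 : (a j • c1 + (1 - a j) • c2) ⬝ᵥ x i
          = a j * (c1 ⬝ᵥ x i) + (1 - a j) * (c2 ⬝ᵥ x i) := by
        rw [add_dotProduct, smul_dotProduct, smul_dotProduct]
        simp [smul_eq_mul]
      linarith
  · intro θ1 θ2 y' hy'
    obtain ⟨hd', hy'0, hray, hcut⟩ := hy'
    have key : ∀ j : Fin (l+1), a i.succ ≤ a j → a j ≤ a i.castSucc →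
        a j * (c1 ⬝ᵥ x i + f1 ⬝ᵥ y i) + (1 - a j) * (c2 ⬝ᵥ x i + f2 ⬝ᵥ y i) ≤
          a j * (θ1 + f1 ⬝ᵥ y') + (1 - a j) * (θ2 + f2 ⬝ᵥ y') := by
      intro j hj1 hj2
      set w : ℝ := a j with hw
      set cw : Fin n → ℝ := a j • c1 + (1 - a j) • c2 with hcw
      have hcwdot : ∀ x' : Fin n → ℝ, cw ⬝ᵥ x' = w * (c1 ⬝ᵥ x') + (1 - w) * (c2 ⬝ᵥ x') := by
        intro x'
        rw [hcw, add_dotProduct, smul_dotProduct, smul_dotProduct]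
        simp [smul_eq_mul, hw]
      have hfeas' : ∃ x' : Fin n → ℝ, 0 ≤ x' ∧ (b - B.mulVec y') ≤ A.mulVec x' := by
        by_contra hno
        obtain ⟨π, hπ0, hπA, hπb⟩ := farkas_ineq A (b - B.mulVec y') hno
        have h1 := hray π hπ0 hπA
        rw [dotProduct_comm] at hπb
        linarith
      set γ : ℝ := w * (c1 ⬝ᵥ x i + f1 ⬝ᵥ y i) + (1 - w) * (c2 ⬝ᵥ x i + f2 ⬝ᵥ y i)
        - (w * (f1 ⬝ᵥ y') + (1 - w) * (f2 ⬝ᵥ y')) with hγ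
      have hlb : ∀ x' : Fin n → ℝ, 0 ≤ x' → (b - B.mulVec y') ≤ A.mulVec x' →
          γ ≤ cw ⬝ᵥ x' := by
        intro x' hx' hx'le
        have hbF : b ≤ A.mulVec x' + B.mulVec y' := by
          intro idx
          have := hx'le idx
          simp only [Pi.sub_apply, Pi.add_apply] at *
          linarith
        have hoptx := hopt i w ⟨hj1, hj2⟩ x' y' ⟨hbF, hd', hx', hy'0⟩
        rw [hcwdot x', hγ]
        nlinarith [hoptx]
      have hfin : γ ≤ w * θ1 + (1 - w) * θ2 := by
        by_contra hlt
        push_neg at hlt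
        obtain ⟨π, hπ0, hπc, hπb⟩ :=
          dual_bound A (b - B.mulVec y') cw γ hfeas' hlb
            ((γ - (w * θ1 + (1 - w) * θ2)) / 2) (by linarith)
        have hc := hcut j π hπ0 hπc
        rw [dotProduct_comm] at hπb
        linarith
      rw [hγ] at hfin
      linarith
    obtain ⟨hl1, hl2⟩ := hlam
    have hcs : a i.castSucc ≤ a i.castSucc := le_refl _
    have hss : a i.succ ≤ a i.castSucc := hdec _ _ (Fin.castSucc_lt_succ (i := i)).le
    have h_u := key i.castSucc hss (le_refl _)
    have h_v := key i.succ (le_refl _) hss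
    set P1 : ℝ := c1 ⬝ᵥ x i + f1 ⬝ᵥ y i
    set P2 : ℝ := c2 ⬝ᵥ x i + f2 ⬝ᵥ y i
    set Q1 : ℝ := θ1 + f1 ⬝ᵥ y'
    set Q2 : ℝ := θ2 + f2 ⬝ᵥ y'
    rcases le_total (Q2 - P2) (Q1 - P1) with hK | hK
    · nlinarith [mul_nonneg (sub_nonneg.2 hl1) (sub_nonneg.2 hK), h_v]
    · nlinarith [mul_nonneg (sub_nonneg.2 hl2) (sub_nonneg.2 hK), h_u]
end

section
/- (Remark: subproblem variables in only one objective.) Suppose c² = 0 ∈ ℝ^n. Let θ₁ ∈ ℝ, θ₂ ≥ 0 and y ∈ ℝ^q satisfy Dy ≥ d, y ≥ 0, π·(b − By) ≤ 0 for every π ∈ ℝ^p with π ≥ 0 and Aᵀπ ≤ 0, and π·(b − By) ≤ θ₁ for every π ∈ ℝ^p with π ≥ 0 and Aᵀπ ≤ c¹. Then (θ₁, θ₂, y) ∈ R; i.e., when c² = 0 the single-objective optimality cuts for λ = 1 together with the feasibility cuts imply all weighted optimality cuts. -/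
open Matrix

/-- If the subproblem variables appear only in the first objective (i.e. `c² = 0`),
then the single-objective optimality cuts for `λ = 1` together with the feasibility
cuts imply all weighted optimality cuts, so `(θ₁, θ₂, y)` with `θ₂ ≥ 0` lies in `R`. -/
theorem subproblem_vars_in_one_objective
    {p n q s : ℕ} (A : Matrix (Fin p) (Fin n) ℝ) (B : Matrix (Fin p) (Fin q) ℝ)
    (D : Matrix (Fin s) (Fin q) ℝ) (b : Fin p → ℝ) (d : Fin s → ℝ)
    (c1 c2 : Fin n → ℝ) (hc2 : c2 = 0)
    (θ1 θ2 : ℝ) (hθ2 : 0 ≤ θ2) (y : Fin q → ℝ)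
    (hDy : d ≤ D.mulVec y) (hy : 0 ≤ y)
    (hray : ∀ π : Fin p → ℝ, 0 ≤ π → Aᵀ.mulVec π ≤ 0 → π ⬝ᵥ (b - B.mulVec y) ≤ 0)
    (hopt1 : ∀ π : Fin p → ℝ, 0 ≤ π → Aᵀ.mulVec π ≤ c1 → π ⬝ᵥ (b - B.mulVec y) ≤ θ1) :
    BRefeas A B D b d c1 c2 θ1 θ2 y := by
  refine ⟨hDy, hy, hray, ?_⟩
  intro lam hlam π hπ hA
  subst hc2
  simp only [smul_zero, add_zero] at hA
  obtain ⟨hl0, hl1⟩ := hlam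
  rcases eq_or_lt_of_le hl0 with h0 | h0
  · have hA0 : Aᵀ.mulVec π ≤ 0 := by
      simpa [← h0] using hA
    have := hray π hπ hA0
    rw [← h0]
    linarith
  · have hA' : Aᵀ.mulVec (lam⁻¹ • π) ≤ c1 := by
      rw [Matrix.mulVec_smul]
      intro i
      have := hA i
      simp only [Pi.smul_apply, smul_eq_mul] at this ⊢
      rw [inv_mul_le_iff₀ h0]
      linarith [this]
    have hπ' : 0 ≤ lam⁻¹ • π := by
      intro i
      exact mul_nonneg (inv_nonneg.mpr hl0) (hπ i)
    have h1 := hopt1 _ hπ' hA'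
    rw [smul_dotProduct] at h1
    have : π ⬝ᵥ (b - B.mulVec y) ≤ lam * θ1 := by
      calc π ⬝ᵥ (b - B.mulVec y) = lam * (lam⁻¹ * (π ⬝ᵥ (b - B.mulVec y))) := by
            field_simp
        _ ≤ lam * θ1 := by
            apply mul_le_mul_of_nonneg_left _ hl0
            simpa using h1
    nlinarith
end

section
/- (Lifting preserves feasibility: validity of all Benders cuts.) If (x, y) ∈ F, then the lifted point (c¹·x, c²·x, y) belongs to R; that is, every feasibility cut and every weighted optimality cut of the Benders reformulation is satisfied by (θ₁, θ₂, y) = (c¹·x, c²·x, y). -/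
open Matrix

private lemma key_ineq {p n : ℕ} (A : Matrix (Fin p) (Fin n) ℝ)
    (π : Fin p → ℝ) (x : Fin n → ℝ) (c : Fin n → ℝ)
    (hx : 0 ≤ x) (h : Aᵀ.mulVec π ≤ c) :
    π ⬝ᵥ A.mulVec x ≤ c ⬝ᵥ x := by
  rw [Matrix.dotProduct_mulVec, ← Matrix.mulVec_transpose]
  exact Finset.sum_le_sum fun i _ => mul_le_mul_of_nonneg_right (h i) (hx i)

/-- Lifting preserves feasibility: every feasibility cut and every weighted optimality
cut of the Benders reformulation is satisfied by `(θ₁, θ₂, y) = (c¹·x, c²·x, y)`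
whenever `(x, y) ∈ F`. -/
theorem lift_mem_reformulation
    {p n q s : ℕ} (A : Matrix (Fin p) (Fin n) ℝ) (B : Matrix (Fin p) (Fin q) ℝ)
    (D : Matrix (Fin s) (Fin q) ℝ) (b : Fin p → ℝ) (d : Fin s → ℝ)
    (c1 c2 : Fin n → ℝ) (f1 f2 : Fin q → ℝ)
    (x : Fin n → ℝ) (y : Fin q → ℝ) (hxy : BFeas A B D b d x y) :
    BRefeas A B D b d c1 c2 (c1 ⬝ᵥ x) (c2 ⬝ᵥ x) y := by
  obtain ⟨hb, hd, hx, hy⟩ := hxy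
  have hbase : ∀ π : Fin p → ℝ, 0 ≤ π → π ⬝ᵥ (b - B.mulVec y) ≤ π ⬝ᵥ A.mulVec x := by
    intro π hπ
    have h1 : b - B.mulVec y ≤ A.mulVec x := by
      intro i; have := hb i; simp only [Pi.add_apply, Pi.sub_apply] at *; linarith
    exact Finset.sum_le_sum fun i _ => mul_le_mul_of_nonneg_left (h1 i) (hπ i)
  refine ⟨hd, hy, ?_, ?_⟩
  · intro π hπ hA
    calc π ⬝ᵥ (b - B.mulVec y) ≤ π ⬝ᵥ A.mulVec x := hbase π hπ
      _ ≤ (0 : Fin n → ℝ) ⬝ᵥ x := key_ineq A π x 0 hx hA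
      _ = 0 := by simp
  · intro lam hlam π hπ hA
    calc π ⬝ᵥ (b - B.mulVec y) ≤ π ⬝ᵥ A.mulVec x := hbase π hπ
      _ ≤ (lam • c1 + (1 - lam) • c2) ⬝ᵥ x := key_ineq A π x _ hx hA
      _ = lam * (c1 ⬝ᵥ x) + (1 - lam) * (c2 ⬝ᵥ x) := by
          simp [add_dotProduct, smul_dotProduct, smul_eq_mul]
end

section
/- (Converse bound from the reformulation cuts.) If (θ₁, θ₂, y) ∈ R and λ ∈ [0,1], then there exists x ∈ ℝ^n with x ≥ 0, Ax ≥ b − By, and λ(c¹·x) + (1−λ)(c²·x) ≤ λθ₁ + (1−λ)θ₂. In particular, the subproblem feasible set S(y) is nonempty. -/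
open Matrix
open scoped InnerProductSpace

variable {E : Type*} [AddCommGroup E] [Module ℝ E]

lemma cone_caratheodory_aux {ι : Type*} [Fintype ι] [DecidableEq ι] (v : ι → E) :
    ∀ (N : ℕ) (S : Finset ι) (x : ι → ℝ), S.card ≤ N → 0 ≤ x → (∀ i ∉ S, x i = 0) →
    ∃ (T : Finset ι) (z : ι → ℝ), 0 ≤ z ∧ (∀ i ∉ T, z i = 0) ∧
      LinearIndependent ℝ (fun i : T => v i) ∧ ∑ i, z i • v i = ∑ i, x i • v i := by
  intro N
  induction N with
  | zero =>
    intro S x hcard hx hsupp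
    have hS : S = ∅ := Finset.card_eq_zero.mp (Nat.le_zero.mp hcard)
    refine ⟨∅, x, hx, fun i _ => hsupp i (by simp [hS]), ?_, rfl⟩
    exact linearIndependent_empty_type
  | succ N ih =>
    intro S x hcard hx hsupp
    by_cases hind : LinearIndependent ℝ (fun i : S => v i)
    · exact ⟨S, x, hx, hsupp, hind, rfl⟩
    · obtain ⟨g, hgsum, i0, hgi0⟩ := Fintype.not_linearIndependent_iff.mp hind
      -- extend g to ι by zero
      set g' : ι → ℝ := fun i => if h : i ∈ S then g ⟨i, h⟩ else 0 with hg'def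
      have hg'supp : ∀ i ∉ S, g' i = 0 := fun i hi => by simp [hg'def, hi]
      have hg'sum : ∑ i, g' i • v i = 0 := by
        rw [← hgsum]
        rw [← Finset.sum_subset (Finset.subset_univ S)
          (fun i _ hi => by simp [hg'supp i hi])]
        rw [← Finset.sum_attach S (fun i => g' i • v i)]
        exact Finset.sum_congr rfl (fun i _ => by simp [hg'def, i.2])
      have hkey : ∀ h : ι → ℝ, (∀ i ∉ S, h i = 0) → (∑ i, h i • v i = 0) →
          (∃ i ∈ S, 0 < h i) →
          ∃ (T : Finset ι) (z : ι → ℝ), 0 ≤ z ∧ (∀ i ∉ T, z i = 0) ∧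
            LinearIndependent ℝ (fun i : T => v i) ∧ ∑ i, z i • v i = ∑ i, x i • v i := by
        intro h hhsupp hhsum ⟨iw, hiwS, hiwpos⟩
        set F : Finset ι := S.filter (fun i => 0 < h i) with hF
        have hFne : F.Nonempty := ⟨iw, by simp [hF, hiwS, hiwpos]⟩
        obtain ⟨j, hjF, hjmin⟩ := Finset.exists_mem_eq_inf' hFne (fun i => x i / h i)
        set t : ℝ := F.inf' hFne (fun i => x i / h i) with ht
        have hjS : j ∈ S := (Finset.mem_filter.mp hjF).1
        have hjpos : 0 < h j := (Finset.mem_filter.mp hjF).2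
        have htnonneg : 0 ≤ t := by
          rw [ht]
          apply Finset.le_inf'
          intro i hi
          exact div_nonneg (hx i) (le_of_lt (Finset.mem_filter.mp hi).2)
        set x' : ι → ℝ := fun i => x i - t * h i with hx'
        have hx'nonneg : 0 ≤ x' := by
          intro i
          by_cases hiF : i ∈ F
          · have h1 : t ≤ x i / h i := Finset.inf'_le _ hiF
            have h2 : 0 < h i := (Finset.mem_filter.mp hiF).2
            have := (le_div_iff₀ h2).mp h1
            simp only [hx', Pi.zero_apply]; linarith
          · have hhle : h i ≤ 0 := by
              by_cases hiS : i ∈ S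
              · by_contra hc
                exact hiF (Finset.mem_filter.mpr ⟨hiS, lt_of_not_ge hc⟩)
              · simp [hhsupp i hiS]
            have : t * h i ≤ 0 := mul_nonpos_iff.mpr (Or.inl ⟨htnonneg, hhle⟩)
            have := hx i
            simp only [hx', Pi.zero_apply] at *; linarith
        have hx'j : x' j = 0 := by
          simp [hx', hjmin, div_mul_cancel₀ _ (ne_of_gt hjpos)]
        have hx'supp : ∀ i ∉ S.erase j, x' i = 0 := by
          intro i hi
          rcases Finset.mem_erase.not.mp hi with h'
          push_neg at h'
          by_cases hij : i = j
          · rw [hij]; exact hx'j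
          · have hiS : i ∉ S := h' hij
            simp [hx', hsupp i hiS, hhsupp i hiS]
        have hcard' : (S.erase j).card ≤ N := by
          have := Finset.card_erase_of_mem hjS
          omega
        have hsum' : ∑ i, x' i • v i = ∑ i, x i • v i := by
          simp only [hx', sub_smul, Finset.sum_sub_distrib, mul_smul]
          rw [← Finset.smul_sum, hhsum, smul_zero, sub_zero]
        obtain ⟨T, z, h1, h2, h3, h4⟩ := ih (S.erase j) x' hcard' hx'nonneg hx'supp
        exact ⟨T, z, h1, h2, h3, h4.trans hsum'⟩
      by_cases hpos : ∃ i ∈ S, 0 < g' i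
      · exact hkey g' hg'supp hg'sum hpos
      · refine hkey (-g') (fun i hi => by simp [hg'supp i hi]) (by simp [hg'sum]) ?_
        refine ⟨i0, i0.2, ?_⟩
        push_neg at hpos
        have h1 : g' i0 ≤ 0 := hpos i0 i0.2
        have h2 : g' i0 ≠ 0 := by simp [hg'def, i0.2]; simpa using hgi0
        simp only [Pi.neg_apply]
        cases lt_or_eq_of_le h1 with
        | inl h => linarith
        | inr h => exact absurd h h2

section Farkas
variable {H : Type*} [NormedAddCommGroup H] [InnerProductSpace ℝ H] [FiniteDimensional ℝ H]
variable {ι : Type*} [Fintype ι] [DecidableEq ι]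

def coneGen (v : ι → H) : Set H := {w | ∃ x : ι → ℝ, 0 ≤ x ∧ ∑ i, x i • v i = w}

lemma cone_caratheodory_s9 (v : ι → H) {w : H} (hw : w ∈ coneGen v) :
    ∃ (T : Finset ι) (z : ι → ℝ), 0 ≤ z ∧ (∀ i ∉ T, z i = 0) ∧
      LinearIndependent ℝ (fun i : T => v i) ∧ ∑ i, z i • v i = w := by
  obtain ⟨x, hx, hsum⟩ := hw
  obtain ⟨T, z, h1, h2, h3, h4⟩ :=
    cone_caratheodory_aux v (Finset.univ.card) Finset.univ x (le_refl _) hx (by simp)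
  exact ⟨T, z, h1, h2, h3, h4.trans hsum⟩

lemma isClosed_coneGen (v : ι → H) : IsClosed (coneGen v) := by
  classical
  have hrepr : coneGen v = ⋃ (T : Finset ι),
      (if LinearIndependent ℝ (fun i : T => v i) then
        (fun z : {i // i ∈ T} → ℝ => ∑ i, z i • v (i : ι)) '' {z | 0 ≤ z} else ∅) := by
    ext w
    constructor
    · intro hw
      obtain ⟨T, z, h1, h2, h3, h4⟩ := cone_caratheodory_s9 v hw
      refine Set.mem_iUnion.mpr ⟨T, ?_⟩
      rw [if_pos h3]
      refine ⟨fun i => z i, fun i => h1 i, ?_⟩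
      have : ∑ i : {i // i ∈ T}, z (i : ι) • v (i : ι) = ∑ i, z i • v i := by
        rw [Finset.sum_coe_sort T (fun i => z i • v i)]
        exact Finset.sum_subset (Finset.subset_univ T) (fun i _ hi => by simp [h2 i hi])
      exact this.trans h4
    · intro hw
      obtain ⟨T, hT⟩ := Set.mem_iUnion.mp hw
      by_cases h3 : LinearIndependent ℝ (fun i : T => v i)
      · rw [if_pos h3] at hT
        obtain ⟨z, hz, hsum⟩ := hT
        refine ⟨fun i => if h : i ∈ T then z ⟨i, h⟩ else 0, fun i => ?_, ?_⟩
        · by_cases h : i ∈ T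
          · simpa [h] using hz ⟨i, h⟩
          · simp [h]
        rw [← hsum]
        rw [← Finset.sum_subset (Finset.subset_univ T)
          (fun i _ hi => by simp [hi])]
        rw [← Finset.sum_coe_sort T (fun i => (if h : i ∈ T then z ⟨i, h⟩ else 0) • v i)]
        exact Finset.sum_congr rfl (fun i _ => by simp [i.2])
      · rw [if_neg h3] at hT
        exact absurd hT (Set.notMem_empty w)
  rw [hrepr]
  apply isClosed_iUnion_of_finite
  intro T
  by_cases h3 : LinearIndependent ℝ (fun i : T => v i)
  · rw [if_pos h3]
    set L : ({i // i ∈ T} → ℝ) →ₗ[ℝ] H :=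
      { toFun := fun z => ∑ i, z i • v (i : ι)
        map_add' := fun a b => by simp [add_smul, Finset.sum_add_distrib]
        map_smul' := fun c a => by simp [mul_smul, Finset.smul_sum] } with hL
    have hinj : Function.Injective L := by
      rw [← LinearMap.ker_eq_bot, LinearMap.ker_eq_bot']
      intro z hz
      have := Fintype.linearIndependent_iff.mp h3 z hz
      funext i; exact this i
    have hemb := LinearMap.isClosedEmbedding_of_injective
      (LinearMap.ker_eq_bot.mpr hinj : LinearMap.ker L = ⊥)
    have hclosed : IsClosed {z : {i // i ∈ T} → ℝ | 0 ≤ z} := by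
      have : {z : {i // i ∈ T} → ℝ | 0 ≤ z} = ⋂ i, {z | 0 ≤ z i} := by
        ext z; simp [Pi.le_def]
      rw [this]
      exact isClosed_iInter (fun i => isClosed_le continuous_const (continuous_apply i))
    exact hemb.isClosedMap _ hclosed
  · rw [if_neg h3]; exact isClosed_empty

def coneGenCone (v : ι → H) : ConvexCone ℝ H where
  carrier := coneGen v
  smul_mem' := fun c hc w hw => by
    obtain ⟨x, hx, hsum⟩ := hw
    exact ⟨c • x, fun i => mul_nonneg (le_of_lt hc) (hx i), by
      simp [← hsum, Finset.smul_sum, mul_smul]⟩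
  add_mem' := fun w1 hw1 w2 hw2 => by
    obtain ⟨x1, hx1, hs1⟩ := hw1
    obtain ⟨x2, hx2, hs2⟩ := hw2
    exact ⟨x1 + x2, fun i => add_nonneg (hx1 i) (hx2 i), by
      simp [add_smul, Finset.sum_add_distrib, hs1, hs2]⟩

open scoped InnerProductSpace in
lemma farkas_cone_s9 [CompleteSpace H] (v : ι → H) (w : H)
    (h : ∀ u : H, (∀ i, 0 ≤ ⟪v i, u⟫_ℝ) → 0 ≤ ⟪u, w⟫_ℝ) : w ∈ coneGen v := by
  by_contra hw
  have hne : ((coneGenCone v : ConvexCone ℝ H) : Set H).Nonempty :=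
    ⟨0, ⟨0, le_refl _, by simp⟩⟩
  have hcl : IsClosed ((coneGenCone v : ConvexCone ℝ H) : Set H) := isClosed_coneGen v
  obtain ⟨u, hu1, hu2⟩ :=
    ConvexCone.hyperplane_separation_of_nonempty_of_isClosed_of_notMem (x₀ := w)
      ({ carrier := coneGen v
         add_mem' := fun hw1 hw2 => (coneGenCone v).add_mem' hw1 hw2
         zero_mem' := ⟨0, le_refl _, by simp⟩
         smul_mem' := fun c w hw => by
           obtain ⟨x, hx, hsum⟩ := hw
           exact ⟨(c : ℝ) • x, fun i => mul_nonneg c.2 (hx i), by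
             rw [← hsum, Finset.smul_sum]
             exact Finset.sum_congr rfl (fun i _ => mul_smul _ _ _)⟩
         isClosed' := isClosed_coneGen v } : ProperCone ℝ H) hw
  have hvi : ∀ i, 0 ≤ ⟪v i, u⟫_ℝ := by
    intro i
    apply hu1
    exact ⟨Pi.single i 1, fun j => by by_cases h : j = i <;> simp [Pi.single_apply, h],
      by simp [Pi.single_apply, Finset.sum_ite_eq]⟩
  exact absurd (h u hvi) (not_le.mpr (by rwa [real_inner_comm] at hu2))

end Farkas

/-- Converse bound from the reformulation cuts: if `(θ₁, θ₂, y) ∈ R` and `λ ∈ [0,1]`,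
then the subproblem `S(y)` contains a point whose `λ`-weighted objective value is at
most `λθ₁ + (1−λ)θ₂`. -/
theorem reformulation_gives_subproblem_point
    {p n q s : ℕ} (A : Matrix (Fin p) (Fin n) ℝ) (B : Matrix (Fin p) (Fin q) ℝ)
    (D : Matrix (Fin s) (Fin q) ℝ) (b : Fin p → ℝ) (d : Fin s → ℝ)
    (c1 c2 : Fin n → ℝ) (θ1 θ2 : ℝ) (y : Fin q → ℝ)
    (hR : BRefeas A B D b d c1 c2 θ1 θ2 y)
    (lam : ℝ) (hlam : lam ∈ Set.Icc (0 : ℝ) 1) :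
    ∃ x : Fin n → ℝ, 0 ≤ x ∧ b - B.mulVec y ≤ A.mulVec x ∧
      lam * (c1 ⬝ᵥ x) + (1 - lam) * (c2 ⬝ᵥ x) ≤ lam * θ1 + (1 - lam) * θ2 := by
  classical
  obtain ⟨hD, hy, hcut0, hcut⟩ := hR
  set b' : Fin p → ℝ := b - B.mulVec y with hb'
  set cc : Fin n → ℝ := fun j => lam * c1 j + (1 - lam) * c2 j with hcc
  set t : ℝ := lam * θ1 + (1 - lam) * θ2 with htdef
  -- columns of the equality-form system
  let v : (Sum (Fin n) (Sum (Fin p) Unit)) → EuclideanSpace ℝ (Sum (Fin p) Unit) := fun k =>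
    Sum.elim
      (fun j => WithLp.toLp 2 (Sum.elim (fun i => A i j) (fun _ => cc j) : Sum (Fin p) Unit → ℝ))
      (Sum.elim
        (fun i' => WithLp.toLp 2 (Sum.elim (fun i => if i = i' then (-1:ℝ) else 0) (fun _ => 0) :
          Sum (Fin p) Unit → ℝ))
        (fun _ => WithLp.toLp 2 (Sum.elim (fun _ => 0) (fun _ => 1) : Sum (Fin p) Unit → ℝ))) k
  let w : EuclideanSpace ℝ (Sum (Fin p) Unit) := WithLp.toLp 2 (Sum.elim b' (fun _ => t) : Sum (Fin p) Unit → ℝ)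
  have hmem : w ∈ coneGen v := by
    apply farkas_cone_s9
    intro u hu
    set π : Fin p → ℝ := fun i => -(u (Sum.inl i)) with hπdef
    set μ : ℝ := u (Sum.inr ()) with hμdef
    have hπ : 0 ≤ π := by
      intro i
      have := hu (Sum.inr (Sum.inl i))
      simp [v, PiLp.inner_apply, RCLike.inner_apply, conj_trivial, Fintype.sum_sum_type,
        ite_mul, Finset.sum_ite_eq'] at this
      simpa [hπdef] using this
    have hμ : 0 ≤ μ := by
      have := hu (Sum.inr (Sum.inr ()))
      simpa [v, PiLp.inner_apply, RCLike.inner_apply, conj_trivial, Fintype.sum_sum_type,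
        hμdef] using this
    have hAπ : ∀ j, (Aᵀ.mulVec π) j ≤ μ * cc j := by
      intro j
      have := hu (Sum.inl j)
      simp [v, PiLp.inner_apply, RCLike.inner_apply, conj_trivial, Fintype.sum_sum_type] at this
      have h2 : (Aᵀ.mulVec π) j = -∑ i, A i j * u (Sum.inl i) := by
        simp [Matrix.mulVec, dotProduct, hπdef, Matrix.transpose_apply, mul_neg,
          Finset.sum_neg_distrib]
      rw [h2]
      simp [hμdef] at this ⊢
      have hc : ∑ a₁, u (Sum.inl a₁) * A a₁ j = ∑ x, A x j * u (Sum.inl x) :=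
        Finset.sum_congr rfl (fun _ _ => mul_comm _ _)
      linarith [this]
    have hgoal : π ⬝ᵥ b' ≤ μ * t := by
      rcases eq_or_lt_of_le hμ with hμ0 | hμpos
      · have hA0 : Aᵀ.mulVec π ≤ 0 := by
          intro j; have := hAπ j; rw [← hμ0] at this; simpa using this
        have := hcut0 π hπ hA0
        rw [← hμ0]; simpa [hb'] using this
      · have hπ' : 0 ≤ μ⁻¹ • π := by
          intro i
          exact mul_nonneg (inv_nonneg.mpr hμ) (hπ i)
        have hle : Aᵀ.mulVec (μ⁻¹ • π) ≤ lam • c1 + (1 - lam) • c2 := by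
          intro j
          have h1 : (Aᵀ.mulVec (μ⁻¹ • π)) j = μ⁻¹ * (Aᵀ.mulVec π) j := by
            rw [Matrix.mulVec_smul]; simp
          rw [h1]
          have h2 := hAπ j
          have h3 : μ⁻¹ * (Aᵀ.mulVec π) j ≤ μ⁻¹ * (μ * cc j) :=
            mul_le_mul_of_nonneg_left h2 (inv_nonneg.mpr hμ)
          have h4 : μ⁻¹ * (μ * cc j) = cc j := by
            field_simp
          simp only [Pi.add_apply, Pi.smul_apply, smul_eq_mul]
          exact h3.trans_eq h4
        have := hcut lam hlam (μ⁻¹ • π) hπ' hle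
        have h5 : (μ⁻¹ • π) ⬝ᵥ (b - B.mulVec y) = μ⁻¹ * (π ⬝ᵥ b') := by
          rw [hb', smul_dotProduct]; rfl
        rw [h5] at this
        rw [htdef]
        calc π ⬝ᵥ b' = μ * (μ⁻¹ * (π ⬝ᵥ b')) := by field_simp
        _ ≤ μ * (lam * θ1 + (1 - lam) * θ2) := mul_le_mul_of_nonneg_left this hμ
    -- now compute the inner product
    have : ⟪u, w⟫_ℝ = -(π ⬝ᵥ b') + μ * t := by
      simp [w, PiLp.inner_apply, RCLike.inner_apply, conj_trivial, Fintype.sum_sum_type,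
        hπdef, hμdef, dotProduct, neg_mul, Finset.sum_neg_distrib, mul_comm]
    rw [this]
    linarith [hgoal]
  obtain ⟨z, hz, hsum⟩ := hmem
  set x : Fin n → ℝ := fun j => z (Sum.inl j) with hx
  have hsum' : ∀ r, ∑ k, z k * (v k : Sum (Fin p) Unit → ℝ) r =
      (w : Sum (Fin p) Unit → ℝ) r := by
    intro r
    have hφ := congrArg (WithLp.linearEquiv 2 ℝ (Sum (Fin p) Unit → ℝ)) hsum
    rw [map_sum] at hφ
    have := congrFun hφ r
    simpa [Finset.sum_apply, Pi.smul_apply, smul_eq_mul] using this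
  refine ⟨x, fun j => hz (Sum.inl j), ?_, ?_⟩
  · intro i
    have h := hsum' (Sum.inl i)
    simp [v, w, Fintype.sum_sum_type, ite_mul, mul_ite, Finset.sum_ite_eq'] at h
    have hAx : (A.mulVec x) i = ∑ j, z (Sum.inl j) * A i j := by
      simp [Matrix.mulVec, dotProduct, hx, mul_comm]
    have hznn : (0:ℝ) ≤ z (Sum.inr (Sum.inl i)) := hz _
    have hgi : (b - B.mulVec y) i = b i - (B.mulVec y) i := rfl
    simp only [Pi.sub_apply]
    rw [hAx]
    linarith [h, hznn]
  · have := hsum' (Sum.inr ())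
    simp [v, w, Fintype.sum_sum_type] at this
    have hznn : (0:ℝ) ≤ z (Sum.inr (Sum.inr ())) := hz _
    have hobj : lam * (c1 ⬝ᵥ x) + (1 - lam) * (c2 ⬝ᵥ x) = ∑ j, z (Sum.inl j) * cc j := by
      have hterm : ∀ j, z (Sum.inl j) * cc j =
          lam * (c1 j * z (Sum.inl j)) + (1 - lam) * (c2 j * z (Sum.inl j)) := by
        intro j; simp only [hcc]; ring
      rw [Finset.sum_congr rfl (fun j _ => hterm j), Finset.sum_add_distrib,
        ← Finset.mul_sum, ← Finset.mul_sum]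
      simp [dotProduct, hx]
    linarith [this, hznn, hobj.le, hobj.ge, htdef.le, htdef.ge]
end

section
/- (Existence of a tight weighted optimality cut at every efficient solution.) If (x̄, ȳ) ∈ F is an efficient solution of the BLP, then there exist λ ∈ (0,1) and π ∈ ℝ^p with π ≥ 0 and Aᵀπ ≤ λc¹ + (1−λ)c² such that π·(b − Bȳ) = λ(c¹·x̄) + (1−λ)(c²·x̄). -/
open Matrix

section FarkasAux

open Finset


variable {ι κ : Type*} [Fintype ι] [Fintype κ] [DecidableEq ι]

/-- Sums `∑ tᵢ vᵢ` with `t ≥ 0` supported on `S`. -/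
def coneS (v : ι → κ → ℝ) (S : Finset ι) : Set (κ → ℝ) :=
  {x | ∃ t : ι → ℝ, (0 ≤ t) ∧ (∀ i ∉ S, t i = 0) ∧ ∑ i, t i • v i = x}

lemma sum_restrict (v : ι → κ → ℝ) (S : Finset ι) (t : ι → ℝ) (ht : ∀ i ∉ S, t i = 0) :
    ∑ i, t i • v i = ∑ i : {i // i ∈ S}, t ↑i • v ↑i := by
  have h1 : ∑ i, t i • v i = ∑ i ∈ S, t i • v i := by
    symm
    apply Finset.sum_subset (Finset.subset_univ S)
    intro i _ hi
    rw [ht i hi, zero_smul]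
  rw [h1, ← Finset.sum_attach S (fun i => t i • v i), Finset.univ_eq_attach]

lemma coneS_isClosed (v : ι → κ → ℝ) (S : Finset ι)
    (hli : LinearIndependent ℝ (fun i : {i // i ∈ S} => v ↑i)) : IsClosed (coneS v S) := by
  classical
  set L : ({i // i ∈ S} → ℝ) →ₗ[ℝ] (κ → ℝ) :=
    Fintype.linearCombination ℝ (fun i : {i // i ∈ S} => v ↑i) with hL
  have hLapp : ∀ g, L g = ∑ i : {i // i ∈ S}, g i • v ↑i := fun g => by
    rw [hL, Fintype.linearCombination_apply]
  have hker : LinearMap.ker L = ⊥ := by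
    rw [LinearMap.ker_eq_bot']
    intro g hg
    have := Fintype.linearIndependent_iff.mp hli g (by rw [← hLapp]; exact hg)
    funext i; exact this i
  have hemb := LinearMap.isClosedEmbedding_of_injective (𝕜 := ℝ) hker
  have himg : coneS v S = L '' (Set.Ici 0) := by
    ext x
    constructor
    · rintro ⟨t, ht0, hts, rfl⟩
      refine ⟨fun i => t ↑i, fun i => ht0 ↑i, ?_⟩
      rw [hLapp]
      exact (sum_restrict v S t hts).symm
    · rintro ⟨u, hu, rfl⟩
      refine ⟨fun i => if h : i ∈ S then u ⟨i, h⟩ else 0, ?_, ?_, ?_⟩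
      · intro i; dsimp; split
        · exact hu _
        · exact le_rfl
      · intro i hi; simp [hi]
      · rw [sum_restrict v S _ (by intro i hi; simp [hi]), hLapp]
        apply Finset.sum_congr rfl
        intro i _; simp [i.2]
  rw [himg]
  exact hemb.isClosedMap _ isClosed_Ici
set_option linter.unusedSectionVars false

lemma coneS_reduce (v : ι → κ → ℝ) :
    ∀ (S : Finset ι), ∀ x ∈ coneS v S, ∃ T ⊆ S,
      LinearIndependent ℝ (fun i : {i // i ∈ T} => v ↑i) ∧ x ∈ coneS v T := by
  intro S
  induction S using Finset.strongInduction with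
  | _ S ih =>
    intro x hx
    by_cases hli : LinearIndependent ℝ (fun i : {i // i ∈ S} => v ↑i)
    · exact ⟨S, Finset.Subset.refl S, hli, hx⟩
    · obtain ⟨t, ht0, hts, htx⟩ := hx
      obtain ⟨g, hgsum, i₁, hgi₁⟩ := Fintype.not_linearIndependent_iff.mp hli
      classical
      -- extend g to ι
      set c0 : ι → ℝ := fun i => if h : i ∈ S then g ⟨i, h⟩ else 0 with hc0
      have hc0sum : ∑ i, c0 i • v i = 0 := by
        rw [sum_restrict v S c0 (by intro i hi; simp [hc0, hi]), ← hgsum]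
        apply Finset.sum_congr rfl
        intro i _; simp [hc0, i.2]
      have hc0S : ∀ i ∉ S, c0 i = 0 := by intro i hi; simp [hc0, hi]
      -- choose sign so that some coefficient is positive
      obtain ⟨c, hcsum, hcS, i₂, hi₂S, hi₂pos⟩ :
          ∃ c : ι → ℝ, (∑ i, c i • v i = 0) ∧ (∀ i ∉ S, c i = 0) ∧
            ∃ i ∈ S, 0 < c i := by
        rcases lt_or_gt_of_ne hgi₁ with h | h
        · refine ⟨-c0, by simp [hc0sum], by intro i hi; simp [hc0S i hi], ↑i₁, i₁.2, ?_⟩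
          have : c0 ↑i₁ = g i₁ := by simp [hc0, i₁.2]
          simp [this]; linarith
        · refine ⟨c0, hc0sum, hc0S, ↑i₁, i₁.2, ?_⟩
          have : c0 ↑i₁ = g i₁ := by simp [hc0, i₁.2]
          rw [this]; exact h
      set P : Finset ι := S.filter (fun i => 0 < c i) with hP
      have hPne : P.Nonempty := ⟨i₂, by simp [hP, hi₂S, hi₂pos]⟩
      obtain ⟨i₀, hi₀P, hi₀min⟩ := Finset.exists_min_image P (fun i => t i / c i) hPne
      have hi₀S : i₀ ∈ S := (Finset.mem_filter.mp hi₀P).1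
      have hci₀ : 0 < c i₀ := (Finset.mem_filter.mp hi₀P).2
      set r : ℝ := t i₀ / c i₀ with hr
      have hr0 : 0 ≤ r := div_nonneg (ht0 i₀) hci₀.le
      set t' : ι → ℝ := fun i => t i - r * c i with ht'
      have ht'0 : 0 ≤ t' := by
        intro i
        by_cases hc : 0 < c i
        · have hiP : i ∈ P := by
            refine Finset.mem_filter.mpr ⟨?_, hc⟩
            by_contra hiS
            rw [hcS i hiS] at hc; exact lt_irrefl 0 hc
          have := hi₀min i hiP
          have : r * c i ≤ t i := by
            rw [hr]
            calc t i₀ / c i₀ * c i ≤ t i / c i * c i := by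
                  apply mul_le_mul_of_nonneg_right (hi₀min i hiP) hc.le
            _ = t i := div_mul_cancel₀ _ hc.ne'
          simpa [ht'] using this
        · push_neg at hc
          have h1 : r * c i ≤ 0 := mul_nonpos_of_nonneg_of_nonpos hr0 hc
          have h2 : (0:ℝ) ≤ t i := ht0 i
          simp only [ht', Pi.zero_apply]
          linarith
      have ht'i₀ : t' i₀ = 0 := by
        simp [ht', hr, div_mul_cancel₀ _ hci₀.ne']
      have ht'S : ∀ i ∉ S.erase i₀, t' i = 0 := by
        intro i hi
        by_cases h : i = i₀
        · rw [h]; exact ht'i₀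
        · have hiS : i ∉ S := fun hS => hi (Finset.mem_erase.mpr ⟨h, hS⟩)
          simp [ht', hts i hiS, hcS i hiS]
      have ht'x : ∑ i, t' i • v i = x := by
        have : ∑ i, t' i • v i = ∑ i, t i • v i - r • ∑ i, c i • v i := by
          rw [Finset.smul_sum, ← Finset.sum_sub_distrib]
          apply Finset.sum_congr rfl
          intro i _
          rw [sub_smul, smul_smul]
        rw [this, hcsum, smul_zero, sub_zero, htx]
      obtain ⟨T, hTsub, hTli, hxT⟩ := ih (S.erase i₀) (Finset.erase_ssubset hi₀S) x
        ⟨t', ht'0, ht'S, ht'x⟩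
      exact ⟨T, hTsub.trans (Finset.erase_subset i₀ S), hTli, hxT⟩
lemma cone_isClosed_s11 (v : ι → κ → ℝ) : IsClosed (coneS v Finset.univ) := by
  classical
  have : coneS v Finset.univ =
      ⋃ (T : Finset ι) (_ : LinearIndependent ℝ (fun i : {i // i ∈ T} => v ↑i)),
        coneS v T := by
    ext x
    constructor
    · intro hx
      obtain ⟨T, _, hTli, hxT⟩ := coneS_reduce v Finset.univ x hx
      exact Set.mem_iUnion.mpr ⟨T, Set.mem_iUnion.mpr ⟨hTli, hxT⟩⟩
    · intro hx
      obtain ⟨T, hT⟩ := Set.mem_iUnion.mp hx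
      obtain ⟨_, t, ht0, _, htx⟩ := Set.mem_iUnion.mp hT
      exact ⟨t, ht0, fun i hi => absurd (Finset.mem_univ i) hi, htx⟩
  rw [this]
  exact isClosed_iUnion_of_finite fun T =>
    isClosed_iUnion_of_finite fun hT => coneS_isClosed v T hT

lemma cone_convex (v : ι → κ → ℝ) : Convex ℝ (coneS v Finset.univ) := by
  rintro x ⟨t₁, ht₁, -, rfl⟩ y ⟨t₂, ht₂, -, rfl⟩ a b ha hb _
  refine ⟨fun i => a * t₁ i + b * t₂ i, ?_, fun i hi => absurd (Finset.mem_univ i) hi, ?_⟩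
  · intro i
    have := ht₁ i; have := ht₂ i
    have : 0 ≤ a * t₁ i := mul_nonneg ha (ht₁ i)
    have : 0 ≤ b * t₂ i := mul_nonneg hb (ht₂ i)
    simp only [Pi.zero_apply]; positivity
  · rw [Finset.smul_sum, Finset.smul_sum, ← Finset.sum_add_distrib]
    apply Finset.sum_congr rfl
    intro i _
    simp [add_smul, smul_smul]

/-- Farkas-type separation: if `b` is not in the cone generated by `v`, there is a linear
functional nonnegative on all generators but negative at `b`. -/
lemma cone_separation [DecidableEq κ] (v : ι → κ → ℝ) (b : κ → ℝ) (hb : b ∉ coneS v Finset.univ) :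
    ∃ z : κ → ℝ, (∀ i, 0 ≤ v i ⬝ᵥ z) ∧ b ⬝ᵥ z < 0 := by
  classical
  obtain ⟨f, u, hfb, hfs⟩ :=
    geometric_hahn_banach_point_closed (cone_convex v) (cone_isClosed_s11 v) hb
  have h0 : (0 : κ → ℝ) ∈ coneS v Finset.univ :=
    ⟨0, le_rfl, fun i _ => rfl, by simp⟩
  have hu0 : u < 0 := by simpa using hfs 0 h0
  have hmem : ∀ i (s : ℝ), 0 ≤ s → s • v i ∈ coneS v Finset.univ := by
    intro i s hs
    refine ⟨fun j => if j = i then s else 0, ?_, fun j hj => absurd (Finset.mem_univ j) hj, ?_⟩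
    · intro j; dsimp; split <;> simp [hs]
    · simp only [ite_smul, zero_smul]
      rw [Finset.sum_ite_eq' Finset.univ i]
      simp
  have hfv : ∀ i, 0 ≤ f (v i) := by
    intro i
    by_contra hneg
    push_neg at hneg
    have hs : 0 ≤ u / f (v i) := div_nonneg_iff.mpr (Or.inr ⟨hu0.le, hneg.le⟩)
    have := hfs _ (hmem i (u / f (v i)) hs)
    rw [ContinuousLinearMap.map_smul, smul_eq_mul, div_mul_cancel₀ _ hneg.ne] at this
    exact lt_irrefl u this
  set z : κ → ℝ := fun j => f (Pi.single j 1) with hz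
  have hrep : ∀ w : κ → ℝ, f w = w ⬝ᵥ z := by
    intro w
    have hw : w = ∑ j, w j • (Pi.single j (1:ℝ) : κ → ℝ) := by
      funext j'
      simp [Finset.sum_apply, Pi.single_apply, Finset.sum_ite_eq' Finset.univ j']
    calc f w = f (∑ j, w j • (Pi.single j (1:ℝ) : κ → ℝ)) := by rw [← hw]
    _ = ∑ j, w j * f (Pi.single j 1) := by rw [map_sum]; simp
    _ = w ⬝ᵥ z := rfl
  refine ⟨z, fun i => by rw [← hrep]; exact hfv i, ?_⟩
  rw [← hrep]
  exact hfb.trans hu0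

/-- Farkas' lemma. -/
lemma farkas_s11 [DecidableEq κ] (M : Matrix ι κ ℝ) (c : κ → ℝ)
    (h : ∀ z : κ → ℝ, 0 ≤ z → 0 ≤ M.mulVec z → 0 ≤ c ⬝ᵥ z) :
    ∃ y : ι → ℝ, 0 ≤ y ∧ Mᵀ.mulVec y ≤ c := by
  classical
  set v : ι ⊕ κ → κ → ℝ := Sum.elim (fun i => M i) (fun j => Pi.single j 1) with hv
  have hc : c ∈ coneS v Finset.univ := by
    by_contra hc
    obtain ⟨z, hz1, hz2⟩ := cone_separation v c hc
    have hz0 : 0 ≤ z := by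
      intro j
      have := hz1 (Sum.inr j)
      simpa [hv, dotProduct, Pi.single_apply] using this
    have hMz : 0 ≤ M.mulVec z := by
      intro i
      have := hz1 (Sum.inl i)
      simpa [hv, Matrix.mulVec, dotProduct] using this
    exact absurd (h z hz0 hMz) (not_le.mpr hz2)
  obtain ⟨t, ht0, -, htc⟩ := hc
  refine ⟨fun i => t (Sum.inl i), fun i => ht0 _, ?_⟩
  intro j
  have hcj : c j = (∑ i, t (Sum.inl i) * M i j) + t (Sum.inr j) := by
    have h2 := congrFun htc j
    rw [Fintype.sum_sum_type] at h2
    simp only [Pi.add_apply, Finset.sum_apply, Pi.smul_apply, smul_eq_mul, hv, Sum.elim_inl,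
      Sum.elim_inr, Pi.single_apply, mul_ite, mul_one, mul_zero,
      Finset.sum_ite_eq, Finset.mem_univ, if_true] at h2
    exact h2.symm
  have : Mᵀ.mulVec (fun i => t (Sum.inl i)) j = ∑ i, t (Sum.inl i) * M i j := by
    simp [Matrix.mulVec, dotProduct, Matrix.transpose_apply, mul_comm]
  rw [this, hcj]
  have h3 : (0:ℝ) ≤ t (Sum.inr j) := ht0 (Sum.inr j)
  linarith
/-- LP strong duality: if `x*` is optimal for `min c·x  s.t. Mx ≥ r, x ≥ 0`, then
there is a dual feasible `y` with `r·y = c·x*`. -/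
lemma lp_strong_duality [DecidableEq κ] (M : Matrix ι κ ℝ) (r : ι → ℝ) (c : κ → ℝ)
    (xs : κ → ℝ) (hxs0 : 0 ≤ xs) (hxsf : r ≤ M.mulVec xs)
    (hopt : ∀ x : κ → ℝ, 0 ≤ x → r ≤ M.mulVec x → c ⬝ᵥ xs ≤ c ⬝ᵥ x) :
    ∃ y : ι → ℝ, 0 ≤ y ∧ Mᵀ.mulVec y ≤ c ∧ r ⬝ᵥ y = c ⬝ᵥ xs := by
  classical
  set P : Matrix ι (κ ⊕ Unit) ℝ := fun i => Sum.elim (fun j => M i j) (fun _ => -r i) with hP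
  set g : κ ⊕ Unit → ℝ := Sum.elim c (fun _ => -(c ⬝ᵥ xs)) with hg
  have key : ∀ z : κ ⊕ Unit → ℝ, 0 ≤ z → 0 ≤ P.mulVec z → 0 ≤ g ⬝ᵥ z := by
    intro z hz0 hPz
    set x : κ → ℝ := fun j => z (Sum.inl j) with hx
    set t : ℝ := z (Sum.inr ()) with ht
    have ht0 : 0 ≤ t := hz0 _
    have hx0 : 0 ≤ x := fun j => hz0 _
    have hPzi : ∀ i, P.mulVec z i = M.mulVec x i - t * r i := by
      intro i
      simp only [Matrix.mulVec, dotProduct, hP]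
      rw [Fintype.sum_sum_type]
      simp [hx, ht]
      ring
    have hgz : g ⬝ᵥ z = c ⬝ᵥ x - t * (c ⬝ᵥ xs) := by
      simp only [dotProduct, hg]
      rw [Fintype.sum_sum_type]
      simp [hx, ht]
      ring
    rw [hgz]
    rcases eq_or_lt_of_le ht0 with hteq | htpos
    · -- t = 0 : M x ≥ 0, so xs + x is feasible
      have hMx : ∀ i, 0 ≤ M.mulVec x i := by
        intro i
        have h1 : (0:ℝ) ≤ M.mulVec x i - t * r i := by
          have := hPz i; rw [hPzi i] at this; simpa using this
        rw [← hteq] at h1; simpa using h1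
      have hfeas : r ≤ M.mulVec (xs + x) := by
        intro i
        rw [Matrix.mulVec_add]
        have h2 := hMx i
        have h3 : r i ≤ M.mulVec xs i := hxsf i
        simp only [Pi.add_apply]
        linarith
      have hpos : 0 ≤ xs + x := by
        intro j
        have h4 : (0:ℝ) ≤ xs j := hxs0 j
        have h5 : (0:ℝ) ≤ x j := hx0 j
        simp only [Pi.add_apply, Pi.zero_apply]
        linarith
      have h6 := hopt (xs + x) hpos hfeas
      rw [dotProduct_add] at h6
      rw [← hteq]
      linarith
    · -- t > 0 : x/t is feasible
      have hfeas : r ≤ M.mulVec (t⁻¹ • x) := by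
        intro i
        rw [Matrix.mulVec_smul]
        have h1 : (0:ℝ) ≤ M.mulVec x i - t * r i := by
          have := hPz i; rw [hPzi i] at this; simpa using this
        have h2 : t * r i ≤ M.mulVec x i := by linarith
        have h4 : r i ≤ t⁻¹ * M.mulVec x i := by
          rw [inv_mul_eq_div, le_div_iff₀ htpos]
          linarith [h2, mul_comm t (r i)]
        simpa [smul_eq_mul] using h4
      have hpos : 0 ≤ t⁻¹ • x := by
        intro j
        have h5 : (0:ℝ) ≤ x j := hx0 j
        have h6 : (0:ℝ) ≤ t⁻¹ := inv_nonneg.mpr ht0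
        simp only [Pi.smul_apply, smul_eq_mul, Pi.zero_apply]
        positivity
      have h5 := hopt (t⁻¹ • x) hpos hfeas
      rw [dotProduct_smul] at h5
      have h6 : t * (c ⬝ᵥ xs) ≤ t * (t⁻¹ • (c ⬝ᵥ x)) :=
        mul_le_mul_of_nonneg_left h5 ht0
      rw [smul_eq_mul, ← mul_assoc, mul_inv_cancel₀ htpos.ne', one_mul] at h6
      linarith
  obtain ⟨y, hy0, hyP⟩ := farkas_s11 P g key
  have hdualfeas : Mᵀ.mulVec y ≤ c := by
    intro j
    have h1 := hyP (Sum.inl j)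
    simpa [hP, hg, Matrix.mulVec, dotProduct, Matrix.transpose_apply, Matrix.transpose, Matrix.of_apply] using h1
  have hry : c ⬝ᵥ xs ≤ r ⬝ᵥ y := by
    have h1 := hyP (Sum.inr ())
    have heq : Pᵀ.mulVec y (Sum.inr ()) = -(r ⬝ᵥ y) := by
      simp only [Matrix.mulVec, dotProduct, Matrix.transpose_apply, hP]
      simp [Finset.sum_neg_distrib, mul_comm, Matrix.transpose, Matrix.of_apply]
    rw [heq] at h1
    have h2 : -(r ⬝ᵥ y) ≤ -(c ⬝ᵥ xs) := by simpa [hg] using h1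
    linarith
  have hweak : r ⬝ᵥ y ≤ c ⬝ᵥ xs := by
    calc r ⬝ᵥ y ≤ M.mulVec xs ⬝ᵥ y := dotProduct_le_dotProduct_of_nonneg_right hxsf hy0
    _ = Mᵀ.mulVec y ⬝ᵥ xs := by
        rw [dotProduct_comm, Matrix.dotProduct_mulVec, ← Matrix.mulVec_transpose,
          dotProduct_comm]
    _ ≤ c ⬝ᵥ xs := dotProduct_le_dotProduct_of_nonneg_right hdualfeas hxs0
  exact ⟨y, hy0, hdualfeas, le_antisymm hweak hry⟩
lemma comb_dot {α : Type*} [Fintype α] (a b : ℝ) (u v w : α → ℝ) :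
    (fun j => a * u j + b * v j) ⬝ᵥ w = a * (u ⬝ᵥ w) + b * (v ⬝ᵥ w) := by
  simp only [dotProduct]
  rw [Finset.mul_sum, Finset.mul_sum, ← Finset.sum_add_distrib]
  apply Finset.sum_congr rfl
  intro i _
  ring

lemma sum_elim_dot {α β : Type*} [Fintype α] [Fintype β] (a : α → ℝ) (b : β → ℝ)
    (u : α → ℝ) (v : β → ℝ) :
    Sum.elim a b ⬝ᵥ Sum.elim u v = a ⬝ᵥ u + b ⬝ᵥ v := by
  simp [dotProduct, Fintype.sum_sum_type]

theorem exists_tight_weighted_cut'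
    {p n q s : ℕ} (A : Matrix (Fin p) (Fin n) ℝ) (B : Matrix (Fin p) (Fin q) ℝ)
    (D : Matrix (Fin s) (Fin q) ℝ) (b : Fin p → ℝ) (d : Fin s → ℝ)
    (c1 c2 : Fin n → ℝ) (f1 f2 : Fin q → ℝ)
    (xb : Fin n → ℝ) (yb : Fin q → ℝ)
    (hfeas : (b ≤ A.mulVec xb + B.mulVec yb ∧ d ≤ D.mulVec yb ∧ 0 ≤ xb ∧ 0 ≤ yb))
    (heff : ¬ ∃ x y, (b ≤ A.mulVec x + B.mulVec y ∧ d ≤ D.mulVec y ∧ 0 ≤ x ∧ 0 ≤ y) ∧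
      c1 ⬝ᵥ x + f1 ⬝ᵥ y ≤ c1 ⬝ᵥ xb + f1 ⬝ᵥ yb ∧
      c2 ⬝ᵥ x + f2 ⬝ᵥ y ≤ c2 ⬝ᵥ xb + f2 ⬝ᵥ yb ∧
      (c1 ⬝ᵥ x + f1 ⬝ᵥ y, c2 ⬝ᵥ x + f2 ⬝ᵥ y) ≠
        (c1 ⬝ᵥ xb + f1 ⬝ᵥ yb, c2 ⬝ᵥ xb + f2 ⬝ᵥ yb)) :
    ∃ lam ∈ Set.Ioo (0 : ℝ) 1, ∃ π : Fin p → ℝ, 0 ≤ π ∧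
      Aᵀ.mulVec π ≤ lam • c1 + (1 - lam) • c2 ∧
      π ⬝ᵥ (b - B.mulVec yb) = lam * (c1 ⬝ᵥ xb) + (1 - lam) * (c2 ⬝ᵥ xb) := by
  classical
  obtain ⟨hf1, hf2, hxb0, hyb0⟩ := hfeas
  set zb1 : ℝ := c1 ⬝ᵥ xb + f1 ⬝ᵥ yb with hzb1
  set zb2 : ℝ := c2 ⬝ᵥ xb + f2 ⬝ᵥ yb with hzb2
  set M : Matrix ((Fin p) ⊕ ((Fin s) ⊕ (Fin 2))) ((Fin n) ⊕ (Fin q)) ℝ :=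
    Sum.elim (fun i => Sum.elim (fun j => A i j) (fun j => B i j))
      (Sum.elim (fun i => Sum.elim (fun _ => (0:ℝ)) (fun j => D i j))
        (fun i => Sum.elim (fun j => -(![c1, c2] i j)) (fun j => -(![f1, f2] i j)))) with hM
  set r : (Fin p) ⊕ ((Fin s) ⊕ (Fin 2)) → ℝ :=
    Sum.elim b (Sum.elim d ![-zb1, -zb2]) with hr
  set cob : (Fin n) ⊕ (Fin q) → ℝ := Sum.elim (c1 + c2) (f1 + f2) with hcob
  set xs : (Fin n) ⊕ (Fin q) → ℝ := Sum.elim xb yb with hxs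
  -- row computations of M *ᵥ (Sum.elim u v)
  have hrow1 : ∀ (u : Fin n → ℝ) (v : Fin q → ℝ) (i : Fin p),
      M.mulVec (Sum.elim u v) (Sum.inl i) = A.mulVec u i + B.mulVec v i := by
    intro u v i
    show Sum.elim (fun j => A i j) (fun j => B i j) ⬝ᵥ Sum.elim u v = _
    rw [sum_elim_dot]; rfl
  have hrow2 : ∀ (u : Fin n → ℝ) (v : Fin q → ℝ) (i : Fin s),
      M.mulVec (Sum.elim u v) (Sum.inr (Sum.inl i)) = D.mulVec v i := by
    intro u v i
    show Sum.elim (fun _ => (0:ℝ)) (fun j => D i j) ⬝ᵥ Sum.elim u v = _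
    rw [sum_elim_dot]
    simp [dotProduct]; rfl
  have hrow3 : ∀ (u : Fin n → ℝ) (v : Fin q → ℝ) (i : Fin 2),
      M.mulVec (Sum.elim u v) (Sum.inr (Sum.inr i)) =
        -((![c1, c2] i) ⬝ᵥ u) - ((![f1, f2] i) ⬝ᵥ v) := by
    intro u v i
    show Sum.elim (fun j => -(![c1, c2] i j)) (fun j => -(![f1, f2] i j)) ⬝ᵥ Sum.elim u v = _
    rw [sum_elim_dot]
    simp [dotProduct, Finset.sum_neg_distrib, neg_mul]
    ring
  -- feasibility of xs
  have hxs0 : 0 ≤ xs := by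
    intro j; cases j with
    | inl j => exact hxb0 j
    | inr j => exact hyb0 j
  have hxsf : r ≤ M.mulVec xs := by
    intro i
    cases i with
    | inl i => rw [hxs, hrow1]; exact hf1 i
    | inr i =>
      cases i with
      | inl i => rw [hxs, hrow2]; exact hf2 i
      | inr i =>
        rw [hxs, hrow3]
        fin_cases i <;> simp [hr, hzb1, hzb2] <;> ring_nf <;> exact le_rfl
  -- optimality of xs for the weighted-sum LP
  have hopt : ∀ x : (Fin n) ⊕ (Fin q) → ℝ, 0 ≤ x → r ≤ M.mulVec x →
      cob ⬝ᵥ xs ≤ cob ⬝ᵥ x := by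
    intro x hx0 hxf
    set x₁ : Fin n → ℝ := fun j => x (Sum.inl j) with hx₁
    set x₂ : Fin q → ℝ := fun j => x (Sum.inr j) with hx₂
    have hxe : x = Sum.elim x₁ x₂ := by funext j; cases j <;> rfl
    rw [hxe] at hxf
    have hcon1 : b ≤ A.mulVec x₁ + B.mulVec x₂ := by
      intro i; have := hxf (Sum.inl i); rw [hrow1] at this; exact this
    have hcon2 : d ≤ D.mulVec x₂ := by
      intro i; have := hxf (Sum.inr (Sum.inl i)); rw [hrow2] at this; exact this
    have hcon3 : c1 ⬝ᵥ x₁ + f1 ⬝ᵥ x₂ ≤ zb1 := by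
      have := hxf (Sum.inr (Sum.inr 0)); rw [hrow3] at this
      simp [hr] at this; linarith
    have hcon4 : c2 ⬝ᵥ x₁ + f2 ⬝ᵥ x₂ ≤ zb2 := by
      have := hxf (Sum.inr (Sum.inr 1)); rw [hrow3] at this
      simp [hr] at this; linarith
    have hx₁0 : 0 ≤ x₁ := fun j => hx0 _
    have hx₂0 : 0 ≤ x₂ := fun j => hx0 _
    have hcobx : cob ⬝ᵥ x = (c1 ⬝ᵥ x₁ + f1 ⬝ᵥ x₂) + (c2 ⬝ᵥ x₁ + f2 ⬝ᵥ x₂) := by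
      rw [hxe, hcob, sum_elim_dot, add_dotProduct, add_dotProduct]
      ring
    have hcobxs : cob ⬝ᵥ xs = zb1 + zb2 := by
      rw [hxs, hcob, sum_elim_dot, add_dotProduct, add_dotProduct,
        hzb1, hzb2]
      ring
    by_cases hne : (c1 ⬝ᵥ x₁ + f1 ⬝ᵥ x₂, c2 ⬝ᵥ x₁ + f2 ⬝ᵥ x₂) = (zb1, zb2)
    · rw [Prod.mk.injEq] at hne
      rw [hcobx, hcobxs, hne.1, hne.2]
    · exact absurd ⟨x₁, x₂, ⟨hcon1, hcon2, hx₁0, hx₂0⟩, hcon3, hcon4, hne⟩ heff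
  -- strong duality
  obtain ⟨y, hy0, hyT, hystrong⟩ := lp_strong_duality M r cob xs hxs0 hxsf hopt
  set π0 : Fin p → ℝ := fun i => y (Sum.inl i) with hπ0
  set σ : Fin s → ℝ := fun i => y (Sum.inr (Sum.inl i)) with hσ
  set μ₁ : ℝ := y (Sum.inr (Sum.inr 0)) with hμ₁
  set μ₂ : ℝ := y (Sum.inr (Sum.inr 1)) with hμ₂
  have hπ00 : 0 ≤ π0 := fun i => hy0 _
  have hσ0 : 0 ≤ σ := fun i => hy0 _
  have hμ₁0 : (0:ℝ) ≤ μ₁ := hy0 _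
  have hμ₂0 : (0:ℝ) ≤ μ₂ := hy0 _
  -- transpose rows
  have hTcol : ∀ (jj : (Fin n) ⊕ (Fin q)), Mᵀ.mulVec y jj = (∑ i, M (Sum.inl i) jj * y (Sum.inl i))
      + (∑ i, M (Sum.inr (Sum.inl i)) jj * y (Sum.inr (Sum.inl i)))
      + (M (Sum.inr (Sum.inr 0)) jj * μ₁ + M (Sum.inr (Sum.inr 1)) jj * μ₂) := by
    intro jj
    simp only [Matrix.mulVec, dotProduct, Matrix.transpose_apply]
    rw [Fintype.sum_sum_type, Fintype.sum_sum_type, Fin.sum_univ_two]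
    ring
  have hT1 : ∀ j, Aᵀ.mulVec π0 j ≤ (1 + μ₁) * c1 j + (1 + μ₂) * c2 j := by
    intro j
    have h1 := hyT (Sum.inl j)
    rw [hTcol] at h1
    have he : Mᵀ.mulVec y (Sum.inl j) = Aᵀ.mulVec π0 j - μ₁ * c1 j - μ₂ * c2 j := by
      rw [hTcol]
      simp [hM, Matrix.mulVec, dotProduct, Matrix.transpose_apply, hπ0]
      ring
    rw [hTcol] at he
    rw [he] at h1
    have h2 : cob (Sum.inl j) = c1 j + c2 j := rfl
    rw [h2] at h1
    linarith
  have hT2 : ∀ j, Bᵀ.mulVec π0 j + Dᵀ.mulVec σ j ≤ (1 + μ₁) * f1 j + (1 + μ₂) * f2 j := by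
    intro j
    have h1 := hyT (Sum.inr j)
    have he : Mᵀ.mulVec y (Sum.inr j) =
        Bᵀ.mulVec π0 j + Dᵀ.mulVec σ j - μ₁ * f1 j - μ₂ * f2 j := by
      rw [hTcol]
      simp [hM, Matrix.mulVec, dotProduct, Matrix.transpose_apply, hπ0, hσ]
      ring
    rw [he] at h1
    have h2 : cob (Sum.inr j) = f1 j + f2 j := rfl
    rw [h2] at h1
    linarith
  have hstrong : b ⬝ᵥ π0 + d ⬝ᵥ σ - μ₁ * zb1 - μ₂ * zb2 = zb1 + zb2 := by
    have he : r ⬝ᵥ y = b ⬝ᵥ π0 + d ⬝ᵥ σ - μ₁ * zb1 - μ₂ * zb2 := by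
      rw [hr, dotProduct, Fintype.sum_sum_type, Fintype.sum_sum_type,
        Fin.sum_univ_two]
      simp [dotProduct, hπ0, hσ]
      ring
    have hcobxs : cob ⬝ᵥ xs = zb1 + zb2 := by
      rw [hxs, hcob, sum_elim_dot, add_dotProduct, add_dotProduct,
        hzb1, hzb2]
      ring
    rw [← he, hystrong, hcobxs]
  -- complementary slackness
  set a1 : ℝ := π0 ⬝ᵥ (A.mulVec xb) with ha1
  set a2 : ℝ := π0 ⬝ᵥ (B.mulVec yb) with ha2
  set a3 : ℝ := σ ⬝ᵥ (D.mulVec yb) with ha3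
  have hE1 : a1 ≤ (1 + μ₁) * (c1 ⬝ᵥ xb) + (1 + μ₂) * (c2 ⬝ᵥ xb) := by
    have h1 : Aᵀ.mulVec π0 ⬝ᵥ xb ≤ (fun j => (1 + μ₁) * c1 j + (1 + μ₂) * c2 j) ⬝ᵥ xb :=
      dotProduct_le_dotProduct_of_nonneg_right (fun j => hT1 j) hxb0
    rw [comb_dot] at h1
    have h2 : Aᵀ.mulVec π0 ⬝ᵥ xb = a1 := by
      rw [ha1, Matrix.dotProduct_mulVec, ← Matrix.mulVec_transpose]
    rw [h2] at h1; exact h1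
  have hE2 : a2 + a3 ≤ (1 + μ₁) * (f1 ⬝ᵥ yb) + (1 + μ₂) * (f2 ⬝ᵥ yb) := by
    have h1 : (fun j => Bᵀ.mulVec π0 j + Dᵀ.mulVec σ j) ⬝ᵥ yb ≤
        (fun j => (1 + μ₁) * f1 j + (1 + μ₂) * f2 j) ⬝ᵥ yb :=
      dotProduct_le_dotProduct_of_nonneg_right (fun j => hT2 j) hyb0
    rw [comb_dot] at h1
    have h2 : (fun j => Bᵀ.mulVec π0 j + Dᵀ.mulVec σ j) ⬝ᵥ yb = a2 + a3 := by
      have : (fun j => Bᵀ.mulVec π0 j + Dᵀ.mulVec σ j) = Bᵀ.mulVec π0 + Dᵀ.mulVec σ := rfl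
      rw [this, add_dotProduct, ha2, ha3,
        Matrix.dotProduct_mulVec, ← Matrix.mulVec_transpose,
        Matrix.dotProduct_mulVec, ← Matrix.mulVec_transpose]
    rw [h2] at h1; exact h1
  have hE3 : π0 ⬝ᵥ b ≤ a1 + a2 := by
    have h1 : π0 ⬝ᵥ b ≤ π0 ⬝ᵥ (A.mulVec xb + B.mulVec yb) :=
      dotProduct_le_dotProduct_of_nonneg_left hf1 hπ00
    rw [dotProduct_add] at h1
    exact h1
  have hE4 : σ ⬝ᵥ d ≤ a3 := dotProduct_le_dotProduct_of_nonneg_left hf2 hσ0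
  have hcomm1 : b ⬝ᵥ π0 = π0 ⬝ᵥ b := dotProduct_comm _ _
  have hcomm2 : d ⬝ᵥ σ = σ ⬝ᵥ d := dotProduct_comm _ _
  have hkey : π0 ⬝ᵥ b - a2 = (1 + μ₁) * (c1 ⬝ᵥ xb) + (1 + μ₂) * (c2 ⬝ᵥ xb) := by
    rw [hcomm1, hcomm2, hzb1, hzb2] at hstrong
    linarith
  -- assemble the answer
  set sc : ℝ := 2 + μ₁ + μ₂ with hsc
  have hsc0 : (0:ℝ) < sc := by rw [hsc]; linarith
  set lam : ℝ := (1 + μ₁) / sc with hlam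
  have hlam1 : 1 - lam = (1 + μ₂) / sc := by
    rw [hlam, hsc]; field_simp; ring
  refine ⟨lam, ⟨by rw [hlam]; exact div_pos (by linarith) hsc0, ?_⟩, sc⁻¹ • π0, ?_, ?_, ?_⟩
  · rw [hlam, div_lt_one hsc0, hsc]; linarith
  · intro i
    have := hπ00 i
    simp only [Pi.smul_apply, smul_eq_mul, Pi.zero_apply]
    exact mul_nonneg (inv_nonneg.mpr hsc0.le) this
  · intro j
    have h1 : Aᵀ.mulVec (sc⁻¹ • π0) j = sc⁻¹ * Aᵀ.mulVec π0 j := by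
      rw [Matrix.mulVec_smul]; simp
    have h2 : (lam • c1 + (1 - lam) • c2) j = lam * c1 j + (1 - lam) * c2 j := by
      simp
    rw [h1, h2, hlam1, hlam]
    have h3 := hT1 j
    have h4 : sc⁻¹ * Aᵀ.mulVec π0 j ≤ sc⁻¹ * ((1 + μ₁) * c1 j + (1 + μ₂) * c2 j) :=
      mul_le_mul_of_nonneg_left h3 (inv_nonneg.mpr hsc0.le)
    calc sc⁻¹ * Aᵀ.mulVec π0 j ≤ sc⁻¹ * ((1 + μ₁) * c1 j + (1 + μ₂) * c2 j) := h4
    _ = (1 + μ₁) / sc * c1 j + (1 + μ₂) / sc * c2 j := by field_simp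
  · have h1 : (sc⁻¹ • π0) ⬝ᵥ (b - B.mulVec yb) = sc⁻¹ * (π0 ⬝ᵥ b - a2) := by
      rw [smul_dotProduct, dotProduct_sub, ha2]
      simp [smul_eq_mul]
    rw [h1, hkey, hlam1, hlam]
    field_simp

end FarkasAux

/-- Existence of a tight weighted optimality cut at every efficient solution: if
`(x̄, ȳ) ∈ F` is efficient for the BLP, then there are `λ ∈ (0,1)` and a dual feasible
`π` of the `λ`-weighted subproblem with `π·(b − Bȳ) = λ(c¹·x̄) + (1−λ)(c²·x̄)`. -/
theorem exists_tight_weighted_cut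
    {p n q s : ℕ} (A : Matrix (Fin p) (Fin n) ℝ) (B : Matrix (Fin p) (Fin q) ℝ)
    (D : Matrix (Fin s) (Fin q) ℝ) (b : Fin p → ℝ) (d : Fin s → ℝ)
    (c1 c2 : Fin n → ℝ) (f1 f2 : Fin q → ℝ)
    (xb : Fin n → ℝ) (yb : Fin q → ℝ)
    (hfeas : BFeas A B D b d xb yb)
    (heff : ¬ ∃ x y, BFeas A B D b d x y ∧
      c1 ⬝ᵥ x + f1 ⬝ᵥ y ≤ c1 ⬝ᵥ xb + f1 ⬝ᵥ yb ∧
      c2 ⬝ᵥ x + f2 ⬝ᵥ y ≤ c2 ⬝ᵥ xb + f2 ⬝ᵥ yb ∧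
      (c1 ⬝ᵥ x + f1 ⬝ᵥ y, c2 ⬝ᵥ x + f2 ⬝ᵥ y) ≠
        (c1 ⬝ᵥ xb + f1 ⬝ᵥ yb, c2 ⬝ᵥ xb + f2 ⬝ᵥ yb)) :
    ∃ lam ∈ Set.Ioo (0 : ℝ) 1, ∃ π : Fin p → ℝ, 0 ≤ π ∧
      Aᵀ.mulVec π ≤ lam • c1 + (1 - lam) • c2 ∧
      π ⬝ᵥ (b - B.mulVec yb) = lam * (c1 ⬝ᵥ xb) + (1 - lam) * (c2 ⬝ᵥ xb) := by
  exact exists_tight_weighted_cut' A B D b d c1 c2 f1 f2 xb yb hfeas heff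
end
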